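/- arXiv:1604.06359 — 5 statements merged into one kernel-verified Lean document; each statement's English description precedes it below -/
import Mathlib

section
/- Let p be a prime and k ≥ 2 an integer with p ∣ k − 1. Then the Higman group H(k) has arbitrarily large finite p-quotients: for every N : ℕ there exist a finite group Q which is a p-group (IsPGroup p Q) with |Q| ≥ N, and a surjective group homomorphism H(k) →* Q. -/
/-- The relators of the Higman group `H(k)`: for each `i : Fin 4` (indices mod 4),
the relator `(a_{i+1} a_i) (a_i a_{i+1}^k)⁻¹`, expressing `a_i⁻¹ a_{i+1} a_i = a_{i+1}^k`. -/
def higmanRels (k : ℕ) : Set (FreeGroup (Fin 4)) :=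
  ⋃ i : Fin 4,
    {(FreeGroup.of (i + 1) * FreeGroup.of i) * (FreeGroup.of i * FreeGroup.of (i + 1) ^ k)⁻¹}

/-- The Higman group `H(k)`. -/
abbrev HigmanGroup (k : ℕ) : Type := PresentedGroup (higmanRels k)

open Polynomial AdjoinRoot SemidirectProduct

namespace HigmanAux

variable (p q : ℕ)

noncomputable def Phi : (ZMod q)[X] := ∑ i ∈ Finset.range p, X ^ i

abbrev Rg : Type := AdjoinRoot (Phi p q)

noncomputable def rt : Rg p q := AdjoinRoot.root (Phi p q)

lemma monic_Phi (hp : p ≠ 0) : (Phi p q).Monic := monic_geom_sum_X hp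

lemma sum_rt : ∑ i ∈ Finset.range p, (rt p q) ^ i = 0 := by
  have h := AdjoinRoot.mk_self (f := Phi p q)
  rw [Phi, map_sum] at h
  simp only [map_pow, AdjoinRoot.mk_X] at h
  exact h

lemma rt_pow_p : (rt p q) ^ p = 1 := by
  have h := geom_sum_mul (rt p q) p
  rw [sum_rt, zero_mul] at h
  exact sub_eq_zero.mp h.symm

lemma rt_pow_mod (n : ℕ) : (rt p q) ^ (n % p) = (rt p q) ^ n := by
  conv_rhs => rw [← Nat.div_add_mod n p]
  rw [pow_add, pow_mul, rt_pow_p, one_pow, one_mul]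

variable [NeZero p]

noncomputable def rtU : (Rg p q)ˣ where
  val := rt p q
  inv := (rt p q) ^ (p - 1)
  val_inv := by
    rw [← pow_succ']
    rw [Nat.sub_add_cancel (Nat.one_le_iff_ne_zero.mpr (NeZero.ne p))]
    exact rt_pow_p p q
  inv_val := by
    rw [← pow_succ]
    rw [Nat.sub_add_cancel (Nat.one_le_iff_ne_zero.mpr (NeZero.ne p))]
    exact rt_pow_p p q

lemma rtU_pow_p : (rtU p q) ^ p = 1 := by
  ext
  rw [Units.val_pow_eq_pow_val, Units.val_one]
  exact rt_pow_p p q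

lemma rtU_pow_mod (n : ℕ) : (rtU p q) ^ (n % p) = (rtU p q) ^ n := by
  conv_rhs => rw [← Nat.div_add_mod n p]
  rw [pow_add, pow_mul, rtU_pow_p, one_pow, one_mul]

noncomputable def chi : Multiplicative (ZMod p) →* (Rg p q)ˣ where
  toFun g := (rtU p q) ^ (Multiplicative.toAdd g).val
  map_one' := by simp
  map_mul' a b := by
    simp only [toAdd_mul]
    rw [ZMod.val_add, rtU_pow_mod, pow_add]

noncomputable def phi : Multiplicative (ZMod p) →* MulAut (Multiplicative (Rg p q)) where
  toFun g := AddEquiv.toMultiplicative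
    ((DistribMulAction.toAddAut (Rg p q)ˣ (Rg p q)) (chi p q g))
  map_one' := by ext r; simp
  map_mul' a b := by ext r; simp [mul_smul]

lemma phi_apply (g : Multiplicative (ZMod p)) (r : Rg p q) :
    phi p q g (Multiplicative.ofAdd r)
      = Multiplicative.ofAdd ((rt p q) ^ (Multiplicative.toAdd g).val * r) := by
  simp [phi, chi, AddEquiv.toMultiplicative, Units.smul_def,
    smul_eq_mul, rtU, Units.val_pow_eq_pow_val]

noncomputable abbrev Gr : Type := Multiplicative (Rg p q) ⋊[phi p q] Multiplicative (ZMod p)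

def hh : Multiplicative (ZMod p) := Multiplicative.ofAdd 1

noncomputable def xg : Gr p q := inr (hh p)

noncomputable def yg : Gr p q := inl (Multiplicative.ofAdd (1 : Rg p q)) * inr (hh p)

lemma hh_pow (n : ℕ) : (hh p) ^ n = Multiplicative.ofAdd (n : ZMod p) := by
  rw [hh, ← ofAdd_nsmul, nsmul_eq_mul, mul_one]

lemma inr_mul_inl (g : Multiplicative (ZMod p)) (u : Multiplicative (Rg p q)) :
    (inr g : Gr p q) * inl u = inl (phi p q g u) * inr g := by
  rw [inl_aut, mul_assoc, ← map_mul, inv_mul_cancel, map_one, mul_one]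

lemma phi_hh_pow (n : ℕ) :
    phi p q ((hh p) ^ n) (Multiplicative.ofAdd (1 : Rg p q))
      = Multiplicative.ofAdd ((rt p q) ^ n) := by
  rw [phi_apply, hh_pow]
  simp only [toAdd_ofAdd, ZMod.val_natCast, mul_one, rt_pow_mod]

lemma inl_ofAdd_mul (a b : Rg p q) :
    (inl (Multiplicative.ofAdd a) : Gr p q) * inl (Multiplicative.ofAdd b)
      = inl (Multiplicative.ofAdd (a + b)) := by
  rw [← map_mul]
  rfl

lemma inr_mul_inr (u v : Multiplicative (ZMod p)) :
    (inr u : Gr p q) * inr v = inr (u * v) := (map_mul _ _ _).symm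

lemma yg_pow (n : ℕ) : (yg p q) ^ n
    = inl (Multiplicative.ofAdd (∑ j ∈ Finset.range n, (rt p q) ^ j)) * inr ((hh p) ^ n) := by
  induction n with
  | zero => simp
  | succ n ih =>
    calc (yg p q) ^ (n + 1)
        = (inl (Multiplicative.ofAdd (∑ j ∈ Finset.range n, (rt p q) ^ j)) * inr ((hh p) ^ n))
            * (inl (Multiplicative.ofAdd (1 : Rg p q)) * inr (hh p)) := by
          rw [pow_succ, ih, yg]
      _ = inl (Multiplicative.ofAdd (∑ j ∈ Finset.range n, (rt p q) ^ j))
            * ((inr ((hh p) ^ n) * inl (Multiplicative.ofAdd (1 : Rg p q))) * inr (hh p)) := by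
          group
      _ = inl (Multiplicative.ofAdd (∑ j ∈ Finset.range n, (rt p q) ^ j))
            * ((inl (Multiplicative.ofAdd ((rt p q) ^ n)) * inr ((hh p) ^ n)) * inr (hh p)) := by
          rw [inr_mul_inl, phi_hh_pow]
      _ = (inl (Multiplicative.ofAdd (∑ j ∈ Finset.range n, (rt p q) ^ j))
            * inl (Multiplicative.ofAdd ((rt p q) ^ n))) * (inr ((hh p) ^ n) * inr (hh p)) := by
          group
      _ = inl (Multiplicative.ofAdd (∑ j ∈ Finset.range (n + 1), (rt p q) ^ j))
            * inr ((hh p) ^ (n + 1)) := by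
          rw [inl_ofAdd_mul, inr_mul_inr, ← pow_succ, Finset.sum_range_succ]

lemma hh_pow_p : (hh p) ^ p = 1 := by
  rw [hh_pow]
  simp

lemma xg_pow_p : (xg p q) ^ p = 1 := by
  rw [xg, ← map_pow, hh_pow_p, map_one]

lemma yg_pow_p : (yg p q) ^ p = 1 := by
  rw [yg_pow, sum_rt, hh_pow_p]
  simp

lemma add_gen [NeZero q] (r : Rg p q) :
    r ∈ AddSubgroup.closure (Set.range fun n : ℕ => (rt p q) ^ n) := by
  induction r using AdjoinRoot.induction_on with
  | ih f =>
    induction f using Polynomial.induction_on' with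
    | add f g hf hg =>
      rw [map_add]
      exact AddSubgroup.add_mem _ hf hg
    | monomial n a =>
      have key : (AdjoinRoot.mk (Phi p q)) (Polynomial.monomial n a)
          = a.val • (rt p q) ^ n := by
        rw [← Polynomial.C_mul_X_pow_eq_monomial, map_mul, map_pow, AdjoinRoot.mk_X,
          AdjoinRoot.mk_C]
        have ha : a = ((a.val : ℕ) : ZMod q) := (ZMod.natCast_rightInverse a).symm
        calc (AdjoinRoot.of (Phi p q)) a * (rt p q) ^ n
            = (AdjoinRoot.of (Phi p q)) ((a.val : ℕ) : ZMod q) * (rt p q) ^ n := by rw [← ha]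
          _ = ((a.val : ℕ) : Rg p q) * (rt p q) ^ n := by rw [map_natCast]
          _ = a.val • (rt p q) ^ n := by rw [nsmul_eq_mul]
      rw [key]
      exact AddSubgroup.nsmul_mem _
        (AddSubgroup.subset_closure (Set.mem_range_self (f := fun n : ℕ => (rt p q) ^ n) n)) _

lemma closure_top [NeZero q] :
    Subgroup.closure {xg p q, yg p q} = (⊤ : Subgroup (Gr p q)) := by
  rw [eq_top_iff]
  intro g _
  set S := Subgroup.closure {xg p q, yg p q} with hS
  have hx : xg p q ∈ S := Subgroup.subset_closure (by simp)
  have hy : yg p q ∈ S := Subgroup.subset_closure (by simp)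
  have hinl1 : (inl (Multiplicative.ofAdd (1 : Rg p q)) : Gr p q) ∈ S := by
    have h1 : (inl (Multiplicative.ofAdd (1 : Rg p q)) : Gr p q) = yg p q * (xg p q)⁻¹ := by
      rw [yg, xg, mul_inv_cancel_right]
    rw [h1]
    exact S.mul_mem hy (S.inv_mem hx)
  have hinr : ∀ u : Multiplicative (ZMod p), (inr u : Gr p q) ∈ S := by
    intro u
    have h1 : (inr u : Gr p q) = (xg p q) ^ (Multiplicative.toAdd u).val := by
      rw [xg, ← map_pow, hh_pow, ZMod.natCast_rightInverse (Multiplicative.toAdd u),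
        ofAdd_toAdd]
    rw [h1]
    exact S.pow_mem hx _
  have hmono : ∀ n : ℕ, (inl (Multiplicative.ofAdd ((rt p q) ^ n)) : Gr p q) ∈ S := by
    intro n
    have heq : (inl (Multiplicative.ofAdd ((rt p q) ^ n)) : Gr p q)
        = inr ((hh p) ^ n) * inl (Multiplicative.ofAdd (1 : Rg p q)) * (inr ((hh p) ^ n))⁻¹ := by
      rw [← map_inv, ← inl_aut, phi_hh_pow]
    rw [heq]
    exact S.mul_mem (S.mul_mem (hinr _) hinl1) (S.inv_mem (hinr _))
  have hinlAll : ∀ r : Rg p q, (inl (Multiplicative.ofAdd r) : Gr p q) ∈ S := by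
    intro r
    let T : AddSubgroup (Rg p q) :=
      { carrier := {r : Rg p q | (inl (Multiplicative.ofAdd r) : Gr p q) ∈ S}
        zero_mem' := by
          have : (inl (Multiplicative.ofAdd (0 : Rg p q)) : Gr p q) = 1 := by
            simp
          simpa [Set.mem_setOf_eq, this] using S.one_mem
        add_mem' := by
          intro a b ha hb
          have : (inl (Multiplicative.ofAdd (a + b)) : Gr p q)
              = inl (Multiplicative.ofAdd a) * inl (Multiplicative.ofAdd b) :=
            (inl_ofAdd_mul p q a b).symm
          simp only [Set.mem_setOf_eq] at *
          rw [this]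
          exact S.mul_mem ha hb
        neg_mem' := by
          intro a ha
          simp only [Set.mem_setOf_eq] at *
          have : (inl (Multiplicative.ofAdd (-a)) : Gr p q)
              = (inl (Multiplicative.ofAdd a))⁻¹ := by
            rw [← map_inv]
            rfl
          rw [this]
          exact S.inv_mem ha }
    have hle : AddSubgroup.closure (Set.range fun n : ℕ => (rt p q) ^ n) ≤ T :=
      (AddSubgroup.closure_le T).mpr (by rintro _ ⟨n, rfl⟩; exact hmono n)
    exact hle (add_gen p q r)
  have hg : g = inl g.left * inr g.right := (inl_left_mul_inr_right g).symm
  rw [hg]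
  exact S.mul_mem (by simpa using hinlAll (Multiplicative.toAdd g.left)) (hinr _)

lemma finite_Rg [NeZero p] [NeZero q] : Finite (Rg p q) := by
  have pb := AdjoinRoot.powerBasis' (monic_Phi p q (NeZero.ne p))
  have e := pb.basis.repr.toEquiv.trans (Finsupp.equivFunOnFinite)
  exact Finite.of_equiv _ e.symm

lemma finite_Gr [NeZero p] [NeZero q] : Finite (Gr p q) := by
  haveI := finite_Rg p q
  exact Finite.of_injective (fun g : Gr p q => (g.left, g.right)) (by
    intro a b hab
    simp only [Prod.mk.injEq] at hab
    exact SemidirectProduct.ext hab.1 hab.2)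

lemma coeff_Phi_one (hp2 : 2 ≤ p) : (Phi p q).coeff 1 = 1 := by
  rw [Phi, Polynomial.finset_sum_coeff]
  simp only [Polynomial.coeff_X_pow]
  rw [Finset.sum_ite_eq (Finset.range p) 1 (fun _ => (1 : ZMod q))]
  rw [if_pos (Finset.mem_range.mpr (by omega))]

lemma natDegree_Phi_pos [Nontrivial (ZMod q)] (hp2 : 2 ≤ p) : 0 < (Phi p q).natDegree := by
  by_contra h
  push_neg at h
  have h0 : (Phi p q).natDegree = 0 := Nat.le_zero.mp h
  have := coeff_Phi_one p q hp2
  rw [Polynomial.coeff_eq_zero_of_natDegree_lt (by omega)] at this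
  exact one_ne_zero this.symm

lemma of_inj [NeZero p] [Nontrivial (ZMod q)] (hp2 : 2 ≤ p) :
    Function.Injective (AdjoinRoot.of (Phi p q)) := by
  intro a b hab
  by_contra hne
  have hz : AdjoinRoot.mk (Phi p q) (Polynomial.C a - Polynomial.C b) = 0 := by
    rw [map_sub, AdjoinRoot.mk_C, AdjoinRoot.mk_C]
    exact sub_eq_zero.mpr hab
  rw [AdjoinRoot.mk_eq_zero, ← Polynomial.C_sub] at hz
  refine (monic_Phi p q (NeZero.ne p)).not_dvd_of_natDegree_lt ?_ ?_ hz
  · rw [Ne, Polynomial.C_eq_zero]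
    exact sub_ne_zero.mpr hne
  · rw [Polynomial.natDegree_C]
    exact natDegree_Phi_pos p q hp2

lemma card_Gr_ge [NeZero p] [NeZero q] [Nontrivial (ZMod q)] (hp2 : 2 ≤ p) :
    q ≤ Nat.card (Gr p q) := by
  haveI := finite_Rg p q
  haveI := finite_Gr p q
  have h1 : q ≤ Nat.card (Rg p q) := by
    have := Nat.card_le_card_of_injective _ (of_inj p q hp2)
    rwa [Nat.card_zmod] at this
  have h2 : Nat.card (Rg p q) = Nat.card (Multiplicative (Rg p q)) := rfl
  have h3 : Nat.card (Multiplicative (Rg p q)) ≤ Nat.card (Gr p q) :=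
    Nat.card_le_card_of_injective _ (inl_injective (φ := phi p q))
  omega

lemma isPGroup_Gr [NeZero p] (m : ℕ) : IsPGroup p (Gr p (p ^ m)) := by
  intro g
  refine ⟨m + 1, ?_⟩
  have h1 : SemidirectProduct.rightHom (g ^ p) = 1 := by
    rw [map_pow]
    set z := SemidirectProduct.rightHom g
    rw [← ofAdd_toAdd z, ← ofAdd_nsmul, nsmul_eq_mul, ZMod.natCast_self, zero_mul]
    rfl
  have h2 : g ^ p ∈ (inl : Multiplicative (Rg p (p ^ m)) →* Gr p (p ^ m)).range := by
    rw [range_inl_eq_ker_rightHom]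
    exact h1
  obtain ⟨u, hu⟩ := h2
  have h3 : u ^ (p ^ m) = 1 := by
    rw [← ofAdd_toAdd u, ← ofAdd_nsmul, nsmul_eq_mul]
    have hc : ((p ^ m : ℕ) : Rg p (p ^ m)) = 0 := by
      rw [← map_natCast (AdjoinRoot.of (Phi p (p ^ m))), ZMod.natCast_self, map_zero]
    rw [hc, zero_mul]
    rfl
  rw [pow_succ', pow_mul, ← hu, ← map_pow, h3, map_one]

end HigmanAux

open HigmanAux SemidirectProduct in
/-- Let `p` be a prime and `k ≥ 2` with `p ∣ k - 1`. Then the Higman group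
`H(k)` has arbitrarily large finite `p`-quotients. -/
theorem higman_has_large_p_quotients
    (p k : ℕ) (hp : Nat.Prime p) (hk : 2 ≤ k) (hdvd : p ∣ k - 1) (N : ℕ) :
    ∃ (Q : Type) (_ : Group Q) (_ : Finite Q),
      IsPGroup p Q ∧ N ≤ Nat.card Q ∧
      ∃ φ : HigmanGroup k →* Q, Function.Surjective φ := by
  have hp1 : 1 < p := hp.one_lt
  haveI : Fact p.Prime := ⟨hp⟩
  haveI : NeZero p := ⟨hp.ne_zero⟩
  set q : ℕ := p ^ (N + 1) with hq
  haveI : NeZero q := ⟨pow_ne_zero _ hp.ne_zero⟩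
  haveI : Fact (1 < q) := ⟨one_lt_pow₀ hp1 (by omega)⟩
  haveI hfin : Finite (Gr p q) := finite_Gr p q
  -- order facts for the two generators
  have hxk : (xg p q) ^ k = xg p q := by
    obtain ⟨t, ht⟩ := hdvd
    have hk1 : k = p * t + 1 := by omega
    rw [hk1, pow_succ, pow_mul, xg_pow_p, one_pow, one_mul]
  have hyk : (yg p q) ^ k = yg p q := by
    obtain ⟨t, ht⟩ := hdvd
    have hk1 : k = p * t + 1 := by omega
    rw [hk1, pow_succ, pow_mul, yg_pow_p, one_pow, one_mul]
  refine ⟨Gr p q, inferInstance, hfin, isPGroup_Gr p (N + 1), ?_, ?_⟩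
  · calc N ≤ p ^ N := (Nat.lt_pow_self (n := N) hp1).le
      _ ≤ q := Nat.pow_le_pow_right hp.pos (by omega)
      _ ≤ Nat.card (Gr p q) := card_Gr_ge p q (by omega)
  · set f : Fin 4 → Gr p q := ![xg p q, 1, yg p q, 1] with hf
    have hrel : ∀ r ∈ higmanRels k, FreeGroup.lift f r = 1 := by
      intro r hr
      simp only [higmanRels, Set.mem_iUnion, Set.mem_singleton_iff] at hr
      obtain ⟨i, rfl⟩ := hr
      simp only [map_mul, map_inv, map_pow, FreeGroup.lift_apply_of]
      rw [mul_inv_eq_one]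
      fin_cases i
      · show f (0 + 1) * f 0 = f 0 * f (0 + 1) ^ k
        simp [hf]
      · show f (1 + 1) * f 1 = f 1 * f (1 + 1) ^ k
        simpa [hf] using hyk.symm
      · show f (2 + 1) * f 2 = f 2 * f (2 + 1) ^ k
        simp [hf]
      · show f (3 + 1) * f 3 = f 3 * f (3 + 1) ^ k
        simpa [hf] using hxk.symm
    refine ⟨PresentedGroup.toGroup hrel, ?_⟩
    rw [← MonoidHom.range_eq_top, eq_top_iff, ← closure_top p q, Subgroup.closure_le]
    rintro z hz
    simp only [Set.mem_insert_iff, Set.mem_singleton_iff] at hz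
    rcases hz with rfl | rfl
    · exact ⟨PresentedGroup.of 0, by rw [PresentedGroup.toGroup.of]; simp [hf]⟩
    · exact ⟨PresentedGroup.of 2, by rw [PresentedGroup.toGroup.of]; simp [hf]⟩
end

section
/- Let p be a prime, n ≥ 1, and let A be an associative unital algebra over ZMod (p^n) (equivalently, a ring in which p^n = 0). Let G be a group and φ : G →* Aˣ a group homomorphism such that for every g ∈ G the element (φ g : A) − 1 lies in p·A (i.e., φ g = 1 + p·a for some a ∈ A). Then the n-th term P n of the p-central series of G is contained in the kernel of φ. -/
open scoped commutatorElement

/-- The `p`-central series of a group `G`: `P 1 = G` and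
`P (i+1) = ⟨{g^p : g ∈ P i} ∪ {⁅g,h⁆ : g ∈ P i, h ∈ G}⟩`. -/
def pCentralSeries (p : ℕ) (G : Type*) [Group G] : ℕ → Subgroup G
  | 0 => ⊤
  | 1 => ⊤
  | (n + 2) => Subgroup.closure
      ({x | ∃ g ∈ pCentralSeries p G (n + 1), x = g ^ p} ∪
       {x | ∃ g ∈ pCentralSeries p G (n + 1), ∃ h : G, x = ⁅g, h⁆})

/-- The units of the form `1 + x * a` for a central element `x` form a subgroup of `Aˣ`. -/
def onePlusSubgroup {A : Type*} [Ring A] (x : A) (hx : ∀ a : A, Commute x a) :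
    Subgroup Aˣ where
  carrier := {u : Aˣ | ∃ a : A, (u : A) = 1 + x * a}
  one_mem' := ⟨0, by simp⟩
  mul_mem' := by
    rintro u v ⟨a, ha⟩ ⟨b, hb⟩
    refine ⟨a + b + a * (x * b), ?_⟩
    rw [Units.val_mul, ha, hb]
    noncomm_ring
  inv_mem' := by
    rintro u ⟨a, ha⟩
    refine ⟨-(↑u⁻¹ * a), ?_⟩
    have h1 : ((u⁻¹ : Aˣ) : A) * (1 + x * a) = 1 := by rw [← ha]; exact u.inv_mul
    rw [mul_add, mul_one] at h1
    have h2 : ((u⁻¹ : Aˣ) : A) = 1 - ↑u⁻¹ * (x * a) := eq_sub_of_add_eq h1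
    have h3 : x * ((u⁻¹ : Aˣ) : A) = ↑u⁻¹ * x := (hx _).eq
    calc ((u⁻¹ : Aˣ) : A) = 1 - ↑u⁻¹ * (x * a) := h2
      _ = 1 - (↑u⁻¹ * x) * a := by rw [mul_assoc]
      _ = 1 - (x * ↑u⁻¹) * a := by rw [h3]
      _ = 1 + x * -(↑u⁻¹ * a) := by noncomm_ring

/-- Binomial-type expansion: `(1+x)^m = 1 + m x + x² r` for some `r`. -/
lemma onePlus_pow {A : Type*} [Ring A] (x : A) (m : ℕ) :
    ∃ r : A, (1 + x) ^ m = 1 + (m : A) * x + (x * x) * r := by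
  induction m with
  | zero => exact ⟨0, by simp⟩
  | succ m ih =>
    obtain ⟨r, hr⟩ := ih
    refine ⟨(m : A) + r + r * x, ?_⟩
    have hm : (m : A) * (x * x) = (x * x) * (m : A) := (Nat.cast_commute m _).eq
    calc (1 + x) ^ (m + 1) = (1 + (m : A) * x + (x * x) * r) * (1 + x) := by
            rw [pow_succ, hr]
      _ = 1 + ((m : A) + 1) * x + ((m : A) * (x * x) + ((x * x) * r + (x * x) * (r * x))) := by
            noncomm_ring
      _ = 1 + ((m : A) + 1) * x + ((x * x) * (m : A) + ((x * x) * r + (x * x) * (r * x))) := by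
            rw [hm]
      _ = 1 + ((m + 1 : ℕ) : A) * x + (x * x) * ((m : A) + r + r * x) := by
            push_cast; noncomm_ring

/-- Let `A` be an associative unital algebra over `ZMod (p^n)`, `G` a group and
`φ : G →* Aˣ` a homomorphism such that `↑(φ g) - 1 ∈ p·A` for all `g`. Then the `n`-th term of
the `p`-central series of `G` is contained in `ker φ`. -/
theorem pCentralSeries_le_ker_of_image_one_add_p
    (p n : ℕ) (hp : Nat.Prime p) (hn : 1 ≤ n)
    (A : Type*) [Ring A] [Algebra (ZMod (p ^ n)) A]
    (G : Type*) [Group G] (φ : G →* Aˣ)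
    (hφ : ∀ g : G, ∃ a : A, (φ g : A) = 1 + (p : A) * a) :
    pCentralSeries p G n ≤ φ.ker := by
  have hc : ∀ a : A, Commute ((p : A)) a := fun a => Nat.cast_commute p a
  have hc0 : ((p : A)) ^ n = 0 := by
    have h1 : ((p ^ n : ℕ) : A) = 0 := by
      rw [← map_natCast (algebraMap (ZMod (p ^ n)) A), ZMod.natCast_self, map_zero]
    rwa [Nat.cast_pow] at h1
  have key : ∀ k, 1 ≤ k → ∀ g ∈ pCentralSeries p G k,
      ∃ a : A, (φ g : A) = 1 + (p : A) ^ k * a := by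
    intro k hk
    induction k, hk using Nat.le_induction with
    | base =>
      intro g _
      obtain ⟨a, ha⟩ := hφ g
      exact ⟨a, by rw [pow_one]; exact ha⟩
    | succ k hk ih =>
      obtain ⟨m, rfl⟩ : ∃ m, k = m + 1 := ⟨k - 1, by omega⟩
      set c : A := (p : A) with hcdef
      have hsucc : c * c ^ (m + 1) = c ^ (m + 2) := (pow_succ' c (m + 1)).symm
      have hsucc2 : c ^ (m + 1) * c = c ^ (m + 2) := (pow_succ c (m + 1)).symm
      have h2m : c ^ (m + 1) * c ^ (m + 1) = c ^ (m + 2) * c ^ m := by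
        rw [← pow_add, ← pow_add]
        have : m + 1 + (m + 1) = m + 2 + m := by omega
        rw [this]
      have hxc : ∀ a : A, Commute (c ^ (m + 2)) a := fun a => (hc a).pow_left _
      -- the target subgroup
      set H : Subgroup G := (onePlusSubgroup (c ^ (m + 2)) hxc).comap φ with hH
      have hmemH : ∀ g : G, (∃ a : A, (φ g : A) = 1 + c ^ (m + 2) * a) → g ∈ H :=
        fun g h => h
      have hgen : ({x | ∃ g ∈ pCentralSeries p G (m + 1), x = g ^ p} ∪
          {x | ∃ g ∈ pCentralSeries p G (m + 1), ∃ h : G, x = ⁅g, h⁆}) ⊆ H := by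
        rintro x (⟨g, hg, rfl⟩ | ⟨g, hg, h, rfl⟩)
        · -- p-th power
          obtain ⟨a, ha⟩ := ih g hg
          set y : A := c ^ (m + 1) * a with hy
          have hac : a * c ^ (m + 1) = c ^ (m + 1) * a := ((hc a).pow_left (m + 1)).eq.symm
          have key3 : a * (c ^ (m + 1) * a) = c ^ (m + 1) * (a * a) := by
            rw [← mul_assoc, hac, mul_assoc]
          have hyy : y * y = c ^ (m + 2) * (c ^ m * (a * a)) := by
            calc y * y = c ^ (m + 1) * (a * (c ^ (m + 1) * a)) := by rw [hy, mul_assoc]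
              _ = c ^ (m + 1) * (c ^ (m + 1) * (a * a)) := by rw [key3]
              _ = (c ^ (m + 1) * c ^ (m + 1)) * (a * a) := by rw [mul_assoc]
              _ = c ^ (m + 2) * c ^ m * (a * a) := by rw [h2m]
              _ = c ^ (m + 2) * (c ^ m * (a * a)) := by rw [mul_assoc]
          have hpy : (p : A) * y = c ^ (m + 2) * a := by
            rw [hy, ← mul_assoc, ← hcdef, hsucc]
          obtain ⟨r, hr⟩ := onePlus_pow y p
          refine hmemH _ ⟨a + (c ^ m * (a * a)) * r, ?_⟩
          rw [map_pow, Units.val_pow_eq_pow_val, ha, hr, hpy, hyy]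
          noncomm_ring
        · -- commutator
          obtain ⟨a, ha⟩ := ih g hg
          obtain ⟨b, hb⟩ := hφ h
          set u := φ g
          set v := φ h
          have hbc : b * c ^ (m + 1) = c ^ (m + 1) * b := ((hc b).pow_left (m + 1)).eq.symm
          have e1 : c ^ (m + 1) * a * (c * b) = c ^ (m + 2) * (a * b) := by
            have k1 : a * (c * b) = c * (a * b) := by
              rw [← mul_assoc, ← (hc a).eq, mul_assoc]
            rw [mul_assoc, k1, ← mul_assoc, hsucc2]
          have e2 : c * b * (c ^ (m + 1) * a) = c ^ (m + 2) * (b * a) := by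
            have k2 : b * (c ^ (m + 1) * a) = c ^ (m + 1) * (b * a) := by
              rw [← mul_assoc, hbc, mul_assoc]
            rw [mul_assoc, k2, ← mul_assoc, hsucc]
          have huv : (u : A) * v - (v : A) * u = c ^ (m + 2) * (a * b - b * a) := by
            rw [ha, hb]
            calc (1 + c ^ (m + 1) * a) * (1 + c * b) - (1 + c * b) * (1 + c ^ (m + 1) * a)
                = c ^ (m + 1) * a * (c * b) - c * b * (c ^ (m + 1) * a) := by noncomm_ring
              _ = c ^ (m + 2) * (a * b) - c ^ (m + 2) * (b * a) := by rw [e1, e2]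
              _ = c ^ (m + 2) * (a * b - b * a) := by noncomm_ring
          have huv' : (u : A) * v = (v : A) * u + c ^ (m + 2) * (a * b - b * a) :=
            sub_eq_iff_eq_add'.mp huv
          have hvu : ((v : A) * u) * (((u⁻¹ : Aˣ) : A) * ((v⁻¹ : Aˣ) : A)) = 1 := by
            calc ((v : A) * u) * (((u⁻¹ : Aˣ) : A) * ((v⁻¹ : Aˣ) : A))
                = (v : A) * ((u : A) * ((u⁻¹ : Aˣ) : A)) * ((v⁻¹ : Aˣ) : A) := by
                  noncomm_ring
              _ = 1 := by rw [u.mul_inv, mul_one, v.mul_inv]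
          have hcommEq : (φ ⁅g, h⁆ : A)
              = ((u : A) * v) * (((u⁻¹ : Aˣ) : A) * ((v⁻¹ : Aˣ) : A)) := by
            rw [commutatorElement_def, map_mul, map_mul, map_mul, map_inv, map_inv]
            push_cast
            noncomm_ring
          refine hmemH _ ⟨(a * b - b * a) * (((u⁻¹ : Aˣ) : A) * ((v⁻¹ : Aˣ) : A)), ?_⟩
          rw [hcommEq, huv', add_mul, hvu]
          noncomm_ring
      intro g hg
      exact (Subgroup.closure_le H).mpr hgen hg
  intro g hg
  obtain ⟨a, ha⟩ := key n hn g hg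
  rw [hc0, zero_mul, add_zero] at ha
  have : φ g = 1 := Units.ext ha
  simpa [MonoidHom.mem_ker] using this
end

section
/- With p, n, k and the ideal I = I(g_0, g_1, g_2, g_3) as in the context, let R = FreeAlgebra (ZMod (p^n)) (Fin 4) ⧸ I, let u_i (i = 0,1,2,3) be units of R whose underlying elements are the images of 1 + p X_i, and let Γ = Subgroup.closure {u_0, u_1, u_2, u_3} ≤ Rˣ. Then there exists a group homomorphism φ : H(k) →* Rˣ with φ(a_i) = u_i for i = 0,1,2,3; any such φ has range exactly Γ and satisfies P n ≤ ker φ, where (P i) is the p-central series of H(k). In particular Γ is a homomorphic image of H(k)/P n. -/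
open scoped commutatorElement

section Aux

variable {R : Type*} [Ring R]

/-- The additive subgroup of multiples of `(p : R)^i`. -/
def pPowMul (p : ℕ) (i : ℕ) : AddSubgroup R where
  carrier := {x | ∃ y, x = (p : R) ^ i * y}
  zero_mem' := ⟨0, by simp⟩
  add_mem' := by rintro a b ⟨y, rfl⟩ ⟨z, rfl⟩; exact ⟨y + z, by rw [mul_add]⟩
  neg_mem' := by rintro a ⟨y, rfl⟩; exact ⟨-y, by rw [mul_neg]⟩

lemma pPowMul_mem {p i : ℕ} {x : R} : x ∈ pPowMul (R := R) p i ↔ ∃ y, x = (p : R) ^ i * y :=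
  Iff.rfl

lemma pPowMul_mul_left {p i : ℕ} {x : R} (r : R) (hx : x ∈ pPowMul (R := R) p i) :
    r * x ∈ pPowMul (R := R) p i := by
  obtain ⟨y, rfl⟩ := hx
  exact ⟨r * y, by rw [← mul_assoc, ← ((Nat.cast_commute p r).pow_left i).eq, mul_assoc]⟩

lemma pPowMul_mul_right {p i : ℕ} {x : R} (r : R) (hx : x ∈ pPowMul (R := R) p i) :
    x * r ∈ pPowMul (R := R) p i := by
  obtain ⟨y, rfl⟩ := hx
  exact ⟨y * r, by rw [mul_assoc]⟩

lemma pPowMul_anti {p i j : ℕ} (hij : i ≤ j) {x : R} (hx : x ∈ pPowMul (R := R) p j) :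
    x ∈ pPowMul (R := R) p i := by
  obtain ⟨y, rfl⟩ := hx
  exact ⟨(p : R) ^ (j - i) * y, by rw [← mul_assoc, ← pow_add, Nat.add_sub_cancel' hij]⟩

lemma pPowMul_mul_mem {p i j : ℕ} {x z : R} (hx : x ∈ pPowMul (R := R) p i)
    (hz : z ∈ pPowMul (R := R) p j) : x * z ∈ pPowMul (R := R) p (i + j) := by
  obtain ⟨y, rfl⟩ := hx
  obtain ⟨w, rfl⟩ := hz
  refine ⟨y * w, ?_⟩
  rw [pow_add, mul_assoc, mul_assoc, ← mul_assoc y, ← ((Nat.cast_commute p y).pow_left j).eq,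
    mul_assoc]

lemma pPowMul_pow_mem {p i : ℕ} {x : R} (hx : x ∈ pPowMul (R := R) p i) (m : ℕ) :
    x ^ m ∈ pPowMul (R := R) p (i * m) := by
  induction m with
  | zero => exact ⟨1, by simp⟩
  | succ m ih =>
    rw [pow_succ, Nat.mul_succ]
    exact pPowMul_mul_mem ih hx

/-- Units congruent to `1` modulo `p^i`. -/
def unitsMod (p : ℕ) (i : ℕ) : Subgroup Rˣ where
  carrier := {v | ((v : R) - 1) ∈ pPowMul (R := R) p i}
  one_mem' := by simpa using (pPowMul (R := R) p i).zero_mem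
  mul_mem' := by
    intro a b ha hb
    have key : ((a * b : Rˣ) : R) - 1 =
        ((a : R) - 1) * ((b : R) - 1) + (((a : R) - 1) + ((b : R) - 1)) := by
      push_cast
      noncomm_ring
    rw [Set.mem_setOf_eq, key]
    exact (pPowMul p i).add_mem (pPowMul_mul_left _ hb) ((pPowMul p i).add_mem ha hb)
  inv_mem' := by
    intro a ha
    have key : ((a⁻¹ : Rˣ) : R) - 1 = -((a⁻¹ : Rˣ) * ((a : R) - 1)) := by
      rw [mul_sub, mul_one, Units.inv_mul, neg_sub]
    rw [Set.mem_setOf_eq, key]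
    exact (pPowMul p i).neg_mem (pPowMul_mul_left _ ha)

lemma unitsMod_mem {p i : ℕ} {v : Rˣ} : v ∈ unitsMod (R := R) p i ↔
    ((v : R) - 1) ∈ pPowMul (R := R) p i := Iff.rfl

lemma unitsMod_pow {p : ℕ} (hp : Nat.Prime p) {i : ℕ} (hi : 1 ≤ i) {v : Rˣ}
    (hv : v ∈ unitsMod (R := R) p i) : v ^ p ∈ unitsMod (R := R) p (i + 1) := by
  rw [unitsMod_mem] at hv ⊢
  have hc : ((v : R) - 1) + 1 = (v : R) := sub_add_cancel _ _
  have expand : ((v ^ p : Rˣ) : R) - 1 =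
      ∑ m ∈ Finset.range p, ((v : R) - 1) ^ (m + 1) * (p.choose (m + 1) : R) := by
    rw [Units.val_pow_eq_pow_val, ← hc, (Commute.one_right ((v : R) - 1)).add_pow,
      Finset.sum_range_succ' (fun m => ((v : R) - 1) ^ m * 1 ^ (p - m) * (p.choose m : R)) p]
    simp [one_pow]
  rw [expand]
  refine Finset.sum_induction _ (· ∈ pPowMul (R := R) p (i + 1))
    (fun a b ha hb => (pPowMul p (i + 1)).add_mem ha hb) ((pPowMul p (i + 1)).zero_mem) ?_
  intro m hm
  rw [Finset.mem_range] at hm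
  rcases eq_or_lt_of_le (Nat.succ_le_of_lt hm) with heq | hlt
  · -- m + 1 = p
    rw [show m + 1 = p from heq, Nat.choose_self, Nat.cast_one, mul_one]
    refine pPowMul_anti ?_ (pPowMul_pow_mem hv p)
    calc i + 1 ≤ i + i := by omega
    _ ≤ i * p := by nlinarith [hp.two_le]
  · -- m + 1 < p
    obtain ⟨t, ht⟩ := hp.dvd_choose_self (Nat.succ_ne_zero m) hlt
    rw [ht]
    push_cast
    rw [← mul_assoc]
    have h1 : ((v : R) - 1) ^ (m + 1) * (p : R) ∈ pPowMul (R := R) p (i + 1) := by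
      have := pPowMul_mul_mem (pPowMul_anti (le_refl i)
        (pPowMul_anti (Nat.le_mul_of_pos_right i (Nat.succ_pos m)) (pPowMul_pow_mem hv (m + 1))))
        (⟨1, by rw [pow_one, mul_one]⟩ : (p : R) ∈ pPowMul (R := R) p 1)
      exact this
    exact pPowMul_mul_right _ h1

lemma unitsMod_commutator {p i : ℕ} {a b : Rˣ} (ha : a ∈ unitsMod (R := R) p i)
    (hb : b ∈ unitsMod (R := R) p 1) : ⁅a, b⁆ ∈ unitsMod (R := R) p (i + 1) := by
  rw [unitsMod_mem] at ha hb ⊢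
  have key : ((⁅a, b⁆ : Rˣ) : R) - 1 =
      ((a : R) * b - (b : R) * a) * ((a⁻¹ : Rˣ) * (b⁻¹ : Rˣ)) := by
    have h1 : ((b : R)) * a * ((a⁻¹ : Rˣ) * (b⁻¹ : Rˣ)) = 1 := by
      rw [mul_assoc (b : R), ← mul_assoc (a : R), Units.mul_inv, one_mul, Units.mul_inv]
    rw [commutatorElement_def]
    push_cast
    rw [sub_mul, h1, mul_assoc, mul_assoc]
  rw [key]
  refine pPowMul_mul_right _ ?_
  have h2 : (a : R) * b - (b : R) * a =
      ((a : R) - 1) * ((b : R) - 1) - ((b : R) - 1) * ((a : R) - 1) := by noncomm_ring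
  rw [h2]
  refine (pPowMul p (i + 1)).sub_mem (pPowMul_mul_mem ha hb) ?_
  have := pPowMul_mul_mem hb ha
  rwa [Nat.add_comm 1 i] at this

end Aux

/-- With `I = I(g_0, g_1, g_2, g_3)` as in the Higman-algebra context, let `R` be
the quotient algebra, `u i` units of `R` whose underlying elements are the images of `1 + p X_i`,
and `Γ = ⟨u_0, u_1, u_2, u_3⟩ ≤ Rˣ`. Then there is a group homomorphism `φ : H(k) →* Rˣ` with
`φ (a i) = u i`; any such `φ` has range `Γ` and satisfies `P n ≤ ker φ`, so `Γ` is a homomorphic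
image of `H(k)/P n`. -/
theorem higman_maps_onto_units_subgroup
    (p n k : ℕ) (hp : Nat.Prime p) (hn : 1 ≤ n) (hk : 2 ≤ k) (hdvd : p ∣ k - 1)
    (h : Fin 4 → FreeAlgebra ℤ (Fin 4))
    (hh : ∀ i : Fin 4, ((p : ℤ) ^ 2) • h i =
      (1 + (p : FreeAlgebra ℤ (Fin 4)) * FreeAlgebra.ι ℤ (i + 1)) *
        (1 + (p : FreeAlgebra ℤ (Fin 4)) * FreeAlgebra.ι ℤ i) -
      (1 + (p : FreeAlgebra ℤ (Fin 4)) * FreeAlgebra.ι ℤ i) *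
        (1 + (p : FreeAlgebra ℤ (Fin 4)) * FreeAlgebra.ι ℤ (i + 1)) ^ k)
    (g : Fin 4 → FreeAlgebra (ZMod (p ^ n)) (Fin 4))
    (hg : ∀ i, g i = FreeAlgebra.lift ℤ (fun j => FreeAlgebra.ι (ZMod (p ^ n)) j) (h i))
    (u : Fin 4 → ((TwoSidedIdeal.span {g 0, g 1, g 2, g 3}).ringCon.Quotient)ˣ)
    (hu : ∀ i, (u i : (TwoSidedIdeal.span {g 0, g 1, g 2, g 3}).ringCon.Quotient) =
      RingCon.mk' (TwoSidedIdeal.span {g 0, g 1, g 2, g 3}).ringCon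
        (1 + (p : FreeAlgebra (ZMod (p ^ n)) (Fin 4)) * FreeAlgebra.ι (ZMod (p ^ n)) i)) :
    (∃ φ : HigmanGroup k →* ((TwoSidedIdeal.span {g 0, g 1, g 2, g 3}).ringCon.Quotient)ˣ,
      ∀ i : Fin 4, φ (PresentedGroup.of i) = u i) ∧
    ∀ φ : HigmanGroup k →* ((TwoSidedIdeal.span {g 0, g 1, g 2, g 3}).ringCon.Quotient)ˣ,
      (∀ i : Fin 4, φ (PresentedGroup.of i) = u i) →
        φ.range = Subgroup.closure {u 0, u 1, u 2, u 3} ∧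
        pCentralSeries p (HigmanGroup k) n ≤ φ.ker := by
  set π : FreeAlgebra (ZMod (p ^ n)) (Fin 4) →+*
      (TwoSidedIdeal.span {g 0, g 1, g 2, g 3}).ringCon.Quotient :=
    RingCon.mk' (TwoSidedIdeal.span {g 0, g 1, g 2, g 3}).ringCon with hπdef
  set ψ : FreeAlgebra ℤ (Fin 4) →ₐ[ℤ] FreeAlgebra (ZMod (p ^ n)) (Fin 4) :=
    FreeAlgebra.lift ℤ (fun j => FreeAlgebra.ι (ZMod (p ^ n)) j) with hψdef
  -- the generators die in the quotient
  have hπg : ∀ i : Fin 4, π (g i) = 0 := by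
    intro i
    have hmem : g i ∈ TwoSidedIdeal.span {g 0, g 1, g 2, g 3} := by
      apply TwoSidedIdeal.subset_span
      fin_cases i <;> simp
    have hrel2 : (TwoSidedIdeal.span {g 0, g 1, g 2, g 3}).ringCon (g i) 0 :=
      (TwoSidedIdeal.rel_iff _ _ _).2 (by simpa using hmem)
    calc π (g i) = π 0 := Quotient.sound hrel2
    _ = 0 := map_zero π
  -- coercion of `u i`
  have hu' : ∀ j : Fin 4, ((u j :
      (TwoSidedIdeal.span {g 0, g 1, g 2, g 3}).ringCon.Quotient)) =
      1 + (p : (TwoSidedIdeal.span {g 0, g 1, g 2, g 3}).ringCon.Quotient) *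
        π (FreeAlgebra.ι (ZMod (p ^ n)) j) := by
    intro j
    rw [hu j, map_add, map_one, map_mul, map_natCast]
  -- the key relation among the units, at the ring level
  have key : ∀ i : Fin 4,
      (↑(u (i + 1)) * ↑(u i) :
        (TwoSidedIdeal.span {g 0, g 1, g 2, g 3}).ringCon.Quotient) =
      ↑(u i) * (↑(u (i + 1)) :
        (TwoSidedIdeal.span {g 0, g 1, g 2, g 3}).ringCon.Quotient) ^ k := by
    intro i
    have e0 : (π.comp ψ.toRingHom) (((p : ℤ) ^ 2) • h i) = 0 := by
      rw [map_zsmul, RingHom.comp_apply, show ψ.toRingHom (h i) = ψ (h i) from rfl,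
        ← hg i, hπg i, smul_zero]
    rw [hh i] at e0
    have hψι : ∀ jj : Fin 4, ψ.toRingHom (FreeAlgebra.ι ℤ jj) =
        FreeAlgebra.ι (ZMod (p ^ n)) jj := fun jj => FreeAlgebra.lift_ι_apply _ jj
    simp only [map_sub, map_mul, map_add, map_one, map_pow, map_natCast, RingHom.comp_apply,
      hψι] at e0
    rw [sub_eq_zero] at e0
    rw [← hu' (i + 1), ← hu' i] at e0
    exact e0
  have keyu : ∀ i : Fin 4, u (i + 1) * u i = u i * u (i + 1) ^ k := by
    intro i
    apply Units.ext
    rw [Units.val_mul, Units.val_mul, Units.val_pow_eq_pow_val]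
    exact key i
  -- existence of φ
  have hlift : ∀ r ∈ higmanRels k, FreeGroup.lift u r = 1 := by
    intro r hr
    rw [higmanRels, Set.mem_iUnion] at hr
    obtain ⟨i, hi⟩ := hr
    rw [Set.mem_singleton_iff] at hi
    subst hi
    simp only [map_mul, map_inv, map_pow, FreeGroup.lift_apply_of]
    rw [mul_inv_eq_one]
    exact keyu i
  refine ⟨⟨PresentedGroup.toGroup hlift, fun i => PresentedGroup.toGroup.of hlift⟩, ?_⟩
  intro φ hφ
  -- the range is the closure of the units
  have hrangeu : Set.range u = ({u 0, u 1, u 2, u 3} : Set _) := by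
    ext x
    constructor
    · rintro ⟨i, rfl⟩
      fin_cases i <;> simp
    · rintro hx
      simp only [Set.mem_insert_iff, Set.mem_singleton_iff] at hx
      rcases hx with rfl | rfl | rfl | rfl
      exacts [⟨0, rfl⟩, ⟨1, rfl⟩, ⟨2, rfl⟩, ⟨3, rfl⟩]
  have hrange : φ.range = Subgroup.closure {u 0, u 1, u 2, u 3} := by
    rw [MonoidHom.range_eq_map, ← PresentedGroup.closure_range_of (higmanRels k),
      MonoidHom.map_closure]
    congr 1
    rw [← Set.range_comp]
    rw [show (⇑φ ∘ PresentedGroup.of) = u from funext hφ]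
    exact hrangeu
  refine ⟨hrange, ?_⟩
  -- the generators are ≡ 1 mod p
  have hu1 : ∀ i : Fin 4, u i ∈ unitsMod p 1 := by
    intro i
    rw [unitsMod_mem, hu' i]
    exact ⟨π (FreeAlgebra.ι (ZMod (p ^ n)) i), by rw [add_sub_cancel_left, pow_one]⟩
  have hφ1 : ∀ x : HigmanGroup k, φ x ∈ unitsMod p 1 := by
    intro x
    have hx : φ x ∈ φ.range := ⟨x, rfl⟩
    rw [hrange] at hx
    refine (Subgroup.closure_le (unitsMod p 1)).2 ?_ hx
    rintro v hv
    simp only [Set.mem_insert_iff, Set.mem_singleton_iff] at hv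
    rcases hv with rfl | rfl | rfl | rfl <;> exact hu1 _
  -- main induction : φ maps P i into unitsMod p i
  have main : ∀ i, ∀ x ∈ pCentralSeries p (HigmanGroup k) i, φ x ∈ unitsMod p i := by
    intro i
    induction i with
    | zero =>
      intro x _
      exact unitsMod_mem.2 ⟨((φ x : _) : _) - 1, by rw [pow_zero, one_mul]⟩
    | succ j ih =>
      match j, ih with
      | 0, _ => exact fun x _ => hφ1 x
      | (m + 1), ih =>
        intro x hx
        have hsub : ({a | ∃ g0 ∈ pCentralSeries p (HigmanGroup k) (m + 1), a = g0 ^ p} ∪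
            {a | ∃ g0 ∈ pCentralSeries p (HigmanGroup k) (m + 1), ∃ h2, a = ⁅g0, h2⁆}) ⊆
            ↑((unitsMod p (m + 1 + 1)).comap φ) := by
          rintro a (⟨g0, hg0, rfl⟩ | ⟨g0, hg0, h2, rfl⟩)
          · simp only [SetLike.mem_coe, Subgroup.mem_comap]
            rw [map_pow]
            exact unitsMod_pow hp (Nat.succ_le_succ (Nat.zero_le m)) (ih g0 hg0)
          · simp only [SetLike.mem_coe, Subgroup.mem_comap]
            rw [map_commutatorElement]
            exact unitsMod_commutator (ih g0 hg0) (hφ1 h2)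
        have hle := (Subgroup.closure_le ((unitsMod p (m + 1 + 1)).comap φ)).2 hsub
        simp only [pCentralSeries] at hx
        exact hle hx
  -- conclude : P n ≤ ker φ
  intro x hx
  have hx' := unitsMod_mem.1 (main n x hx)
  obtain ⟨y, hy⟩ := hx'
  have hpn : ((p : (TwoSidedIdeal.span {g 0, g 1, g 2, g 3}).ringCon.Quotient)) ^ n = 0 := by
    have h1 : ((p ^ n : ℕ) : FreeAlgebra (ZMod (p ^ n)) (Fin 4)) = 0 := by
      rw [← map_natCast (algebraMap (ZMod (p ^ n)) (FreeAlgebra (ZMod (p ^ n)) (Fin 4))) (p ^ n),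
        ZMod.natCast_self, map_zero]
    rw [← Nat.cast_pow, ← map_natCast π (p ^ n), h1, map_zero]
  rw [MonoidHom.mem_ker]
  apply Units.ext
  rw [Units.val_one]
  have hval : ((φ x : (TwoSidedIdeal.span {g 0, g 1, g 2, g 3}).ringCon.Quotientˣ) :
      (TwoSidedIdeal.span {g 0, g 1, g 2, g 3}).ringCon.Quotient) - 1 = 0 := by
    rw [hy, hpn, zero_mul]
  exact sub_eq_zero.mp hval
end

section
/- With p, n, k and the two-variable relator g_0 as in the context, the images modulo the two-sided ideal I(g_0) of the monomials X_0^i * X_1^j, for (i, j) ∈ ℕ × ℕ, form a basis of the quotient FreeAlgebra (ZMod (p^n)) (Fin 2) ⧸ I(g_0) as a ZMod (p^n)-module: they are ZMod (p^n)-linearly independent and span the quotient. -/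
open Finset

noncomputable section BS

variable {S : Type*} [Ring S]

/-- The "reduct": in the quotient, `y*x` equals `bsReduct p k d x y`. -/
def bsReduct (p k d : ℕ) (u v : S) : S :=
  (k : ℤ) • (u * v) + (d : ℤ) • v
    + ∑ m ∈ Finset.Icc 2 k, ((k.choose m * p ^ (m - 2) : ℕ) : ℤ) • v ^ m
    + ∑ m ∈ Finset.Icc 2 k, ((k.choose m * p ^ (m - 1) : ℕ) : ℤ) • (u * v ^ m)

lemma map_bsReduct {T : Type*} [Ring T] (f : S →+* T) (p k d : ℕ) (u v : S) :
    f (bsReduct p k d u v) = bsReduct p k d (f u) (f v) := by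
  simp [bsReduct, map_sum, map_mul, map_pow, map_add, map_zsmul]

lemma sum_range_split (k : ℕ) (hk : 2 ≤ k) (f : ℕ → S) :
    ∑ m ∈ range (k+1), f m = f 0 + f 1 + ∑ m ∈ Icc 2 k, f m := by
  rw [show range (k+1) = insert 0 (insert 1 (Icc 2 k)) by ext m; simp; omega]
  rw [Finset.sum_insert (by simp), Finset.sum_insert (by simp)]
  abel

lemma bs_key (p k d : ℕ) (hk : 2 ≤ k) (hd : p * d = k - 1) (x y : S) :
    (1 + (p : S) * y) * (1 + (p : S) * x) - (1 + (p : S) * x) * (1 + (p : S) * y) ^ k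
      = ((p : ℤ) ^ 2) • (y * x - bsReduct p k d x y) := by
  have hd' : (p : ℤ) * (d : ℤ) = (k : ℤ) - 1 := by
    have : ((p * d : ℕ) : ℤ) = ((k - 1 : ℕ) : ℤ) := by rw [hd]
    push_cast [Nat.cast_sub (by omega : 1 ≤ k)] at this
    linarith
  have hc : ∀ z : S, (p : S) * z = (p : ℤ) • z := fun z => by
    rw [zsmul_eq_mul, Int.cast_natCast]
  have hpow : (1 + (p : S) * y) ^ k
      = ∑ m ∈ range (k+1), ((k.choose m * p ^ m : ℕ) : ℤ) • y ^ m := by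
    rw [add_comm (1 : S), ((Commute.one_right ((p:S) * y)).add_pow k)]
    refine Finset.sum_congr rfl fun m _ => ?_
    have hr : ∀ (c : ℕ) (a : S), a * (c : S) = (c : ℤ) • a := fun c a => by
      rw [zsmul_eq_mul, Int.cast_natCast, (Nat.cast_commute c a).eq]
    rw [one_pow, mul_one, hc y, smul_pow, hr, smul_smul]
    congr 1
  set S1 : S := ∑ m ∈ Icc 2 k, ((k.choose m * p ^ m : ℕ) : ℤ) • y ^ m with hS1
  set S2 : S := ∑ m ∈ Icc 2 k, ((k.choose m * p ^ (m+1) : ℕ) : ℤ) • (x * y ^ m) with hS2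
  have e3 : (p : ℤ) • ((x : S) * S1) = S2 := by
    rw [hS1, hS2, Finset.mul_sum, Finset.smul_sum]
    refine Finset.sum_congr rfl fun m hm => ?_
    rw [mul_smul_comm, smul_smul]
    congr 1
    push_cast; ring
  have e4 : ((p:ℤ)^2) • (∑ m ∈ Finset.Icc 2 k, ((k.choose m * p ^ (m - 2) : ℕ) : ℤ) • (y:S) ^ m)
      = S1 := by
    rw [hS1, Finset.smul_sum]
    refine Finset.sum_congr rfl fun m hm => ?_
    rw [smul_smul]
    congr 1
    have h2 : 2 ≤ m := (Finset.mem_Icc.mp hm).1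
    have : (p:ℤ)^(m-2) * (p:ℤ)^2 = (p:ℤ)^m := by
      rw [← pow_add]; congr 1; omega
    push_cast
    nlinarith [this]
  have e5 : ((p:ℤ)^2) • (∑ m ∈ Finset.Icc 2 k, ((k.choose m * p ^ (m - 1) : ℕ) : ℤ) • ((x:S) * y ^ m))
      = S2 := by
    rw [hS2, Finset.smul_sum]
    refine Finset.sum_congr rfl fun m hm => ?_
    rw [smul_smul]
    congr 1
    have h2 : 2 ≤ m := (Finset.mem_Icc.mp hm).1
    have : (p:ℤ)^(m-1) * (p:ℤ)^2 = (p:ℤ)^(m+1) := by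
      rw [← pow_add]; congr 1; omega
    push_cast
    nlinarith [this]
  rw [hpow, sum_range_split k hk]
  simp only [pow_zero, pow_one, Nat.choose_zero_right, Nat.choose_one_right, one_mul, mul_one,
    Nat.cast_one, one_smul, bsReduct, smul_sub, smul_add]
  rw [e4, e5]
  rw [hc x, hc y]
  simp only [mul_add, add_mul, one_mul, mul_one, smul_mul_assoc, mul_smul_comm, smul_smul,
    smul_add, smul_sub]
  rw [e3]
  match_scalars
  all_goals push_cast
  all_goals try ring_nf
  all_goals linear_combination ((p:ℤ)) * hd'

end BS


section Model

variable {R : Type*} [CommRing R] (p k d : ℕ)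

local notation "P" => Polynomial R
local notation "M" => (ℕ →₀ Polynomial R)

/-- shift operator `single i q ↦ single (i+1) q`. -/
noncomputable def bsX : Module.End R (ℕ →₀ Polynomial R) :=
  Finsupp.lmapDomain (Polynomial R) R Nat.succ

lemma bsX_single (u : ℕ) (q : P) :
    (bsX (R := R)) (Finsupp.single u q) = Finsupp.single (u + 1) q := by
  simp [bsX, Finsupp.lmapDomain_apply, Finsupp.mapDomain_single]

noncomputable def bsY0 : Polynomial R →ₗ[R] (ℕ →₀ Polynomial R) :=
  (Finsupp.lsingle 0) ∘ₗ (LinearMap.mulLeft R (Polynomial.X : Polynomial R))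

noncomputable def bsStep (W : Module.End R M) : Module.End R M :=
  Finsupp.lsum R fun j =>
    Nat.casesOn j bsY0 (fun j' => (bsReduct p k d bsX W) ∘ₗ Finsupp.lsingle j')

lemma bsStep_single_zero (W : Module.End R M) (q : P) :
    bsStep p k d W (Finsupp.single 0 q) = Finsupp.single 0 (Polynomial.X * q) := by
  simp [bsStep, Finsupp.lsum_single, bsY0]

lemma bsStep_single_succ (W : Module.End R M) (j : ℕ) (q : P) :
    bsStep p k d W (Finsupp.single (j + 1) q)
      = (bsReduct p k d bsX W) (Finsupp.single j q) := by
  simp [bsStep, Finsupp.lsum_single]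

noncomputable def bsW (i : ℕ) : Module.End R M := (bsStep p k d)^[i] 0

lemma bsW_succ (i : ℕ) : bsW (R := R) p k d (i + 1) = bsStep p k d (bsW p k d i) :=
  Function.iterate_succ_apply' _ _ _

noncomputable def bsYhat : Module.End R M :=
  Finsupp.lsum R fun j => (bsW p k d (j + 1)) ∘ₗ Finsupp.lsingle j

lemma bsYhat_single (j : ℕ) (q : P) :
    bsYhat p k d (Finsupp.single j q) = bsW p k d (j + 1) (Finsupp.single j q) := by
  simp [bsYhat, Finsupp.lsum_single]

/-- submodule of elements supported in degrees `≤ j` -/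
noncomputable def bsMle (j : ℕ) : Submodule R M :=
  Submodule.span R {v | ∃ u q, u ≤ j ∧ v = Finsupp.single u q}

lemma single_mem_bsMle {u j : ℕ} (h : u ≤ j) (q : P) :
    Finsupp.single u q ∈ bsMle (R := R) j :=
  Submodule.subset_span ⟨u, q, h, rfl⟩

lemma bsMle_mono {j j' : ℕ} (h : j ≤ j') : bsMle (R := R) j ≤ bsMle j' :=
  Submodule.span_mono fun v ⟨u, q, hu, hv⟩ => ⟨u, q, hu.trans h, hv⟩

lemma map_mem_of_span {M₀ : Type*} [AddCommMonoid M₀] [Module R M₀]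
    {f : M₀ →ₗ[R] M₀} {s : Set M₀} {N : Submodule R M₀}
    (h : ∀ x ∈ s, f x ∈ N) : ∀ v ∈ Submodule.span R s, f v ∈ N := by
  intro v hv
  have hle : Submodule.span R s ≤ N.comap f := Submodule.span_le.mpr fun x hx => h x hx
  exact hle hv

lemma bsX_mem {j : ℕ} : ∀ v ∈ bsMle (R := R) j, bsX v ∈ bsMle (R := R) (j + 1) := by
  refine map_mem_of_span ?_
  rintro x ⟨u, q, hu, rfl⟩
  rw [bsX_single]
  exact single_mem_bsMle (by omega) q

lemma pow_agree {M₀ : Type*} [AddCommMonoid M₀] [Module R M₀]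
    {W Y : Module.End R M₀} {N : Submodule R M₀}
    (hY : ∀ v ∈ N, Y v ∈ N) (hWY : ∀ v ∈ N, W v = Y v) :
    ∀ m, ∀ v ∈ N, (Y ^ m) v ∈ N ∧ (W ^ m) v = (Y ^ m) v := by
  intro m
  induction m with
  | zero => intro v hv; simpa using hv
  | succ m ih =>
      intro v hv
      rw [pow_succ, pow_succ, Module.End.mul_apply, Module.End.mul_apply, hWY v hv]
      exact ⟨(ih _ (hY v hv)).1, (ih _ (hY v hv)).2⟩

lemma bsReduct_apply {M₀ : Type*} [AddCommGroup M₀] [Module R M₀]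
    (X Y : Module.End R M₀) (v : M₀) :
    (bsReduct p k d X Y) v
      = (k : ℤ) • X (Y v) + (d : ℤ) • Y v
        + ∑ m ∈ Finset.Icc 2 k, ((k.choose m * p ^ (m - 2) : ℕ) : ℤ) • (Y ^ m) v
        + ∑ m ∈ Finset.Icc 2 k, ((k.choose m * p ^ (m - 1) : ℕ) : ℤ) • X ((Y ^ m) v) := by
  simp only [bsReduct, LinearMap.add_apply, LinearMap.smul_apply, LinearMap.sum_apply,
    Module.End.mul_apply]

lemma bsReduct_agree {M₀ : Type*} [AddCommGroup M₀] [Module R M₀]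
    (X : Module.End R M₀) {W Y : Module.End R M₀} {N : Submodule R M₀}
    (hY : ∀ v ∈ N, Y v ∈ N) (hWY : ∀ v ∈ N, W v = Y v) {v : M₀} (hv : v ∈ N) :
    (bsReduct p k d X W) v = (bsReduct p k d X Y) v := by
  have hpow := pow_agree hY hWY
  have h3 : ∑ m ∈ Finset.Icc 2 k, ((k.choose m * p ^ (m - 2) : ℕ) : ℤ) • (W ^ m) v
      = ∑ m ∈ Finset.Icc 2 k, ((k.choose m * p ^ (m - 2) : ℕ) : ℤ) • (Y ^ m) v :=
    Finset.sum_congr rfl fun m _ => by rw [(hpow m v hv).2]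
  have h4 : ∑ m ∈ Finset.Icc 2 k, ((k.choose m * p ^ (m - 1) : ℕ) : ℤ) • X ((W ^ m) v)
      = ∑ m ∈ Finset.Icc 2 k, ((k.choose m * p ^ (m - 1) : ℕ) : ℤ) • X ((Y ^ m) v) :=
    Finset.sum_congr rfl fun m _ => by rw [(hpow m v hv).2]
  rw [bsReduct_apply, bsReduct_apply, hWY v hv, h3, h4]

lemma zsmul_mem_submodule {M₀ : Type*} [AddCommGroup M₀] [Module R M₀]
    {N : Submodule R M₀} (c : ℤ) {x : M₀} (hx : x ∈ N) : c • x ∈ N :=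
  N.toAddSubgroup.zsmul_mem hx c

lemma bsReduct_mem {X Y : Module.End R M} {j : ℕ}
    (hY : ∀ v ∈ bsMle (R := R) j, Y v ∈ bsMle (R := R) j)
    (hX : ∀ v ∈ bsMle (R := R) j, X v ∈ bsMle (R := R) (j + 1))
    {v : ℕ →₀ Polynomial R} (hv : v ∈ bsMle (R := R) j) :
    (bsReduct p k d X Y) v ∈ bsMle (R := R) (j + 1) := by
  rw [bsReduct_apply]
  have hle : bsMle (R := R) j ≤ bsMle (R := R) (j + 1) := bsMle_mono (by omega)
  have hpow : ∀ m, (Y ^ m) v ∈ bsMle (R := R) j := fun m =>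
    (pow_agree hY (fun _ _ => rfl) m v hv).1
  refine Submodule.add_mem _ (Submodule.add_mem _ (Submodule.add_mem _ ?_ ?_) ?_) ?_
  · exact zsmul_mem_submodule _ (hX _ (hY _ hv))
  · exact zsmul_mem_submodule _ (hle (hY _ hv))
  · exact Submodule.sum_mem _ fun m _ => zsmul_mem_submodule _ (hle (hpow m))
  · exact Submodule.sum_mem _ fun m _ => zsmul_mem_submodule _ (hX _ (hpow m))

end Model

section Model2

variable {R : Type*} [CommRing R] (p k d : ℕ)

lemma bs_main : ∀ j : ℕ, ∀ q : Polynomial R,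
    (bsYhat p k d (Finsupp.single j q) ∈ bsMle (R := R) j) ∧
    ∀ i, j ≤ i → bsW p k d (i+1) (Finsupp.single j q)
      = bsYhat p k d (Finsupp.single j q) := by
  intro j
  induction j using Nat.strong_induction_on with
  | _ j ih =>
    have hYmle : ∀ t, t < j → ∀ v ∈ bsMle (R := R) t,
        bsYhat p k d v ∈ bsMle (R := R) t := by
      intro t ht
      refine map_mem_of_span ?_
      rintro x ⟨u, q, hu, rfl⟩
      exact bsMle_mono hu ((ih u (lt_of_le_of_lt hu ht) q).1)
    have hWagree : ∀ t, t < j → ∀ i, t ≤ i → ∀ v ∈ bsMle (R := R) t,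
        bsW p k d (i+1) v = bsYhat p k d v := by
      intro t ht i hti v hv
      have : ((bsW p k d (i+1) - bsYhat p k d : Module.End R (ℕ →₀ Polynomial R))) v ∈ (⊥ : Submodule R (ℕ →₀ Polynomial R)) := by
        refine map_mem_of_span ?_ v hv
        rintro x ⟨u, q, hu, rfl⟩
        rw [Submodule.mem_bot, LinearMap.sub_apply, sub_eq_zero]
        exact (ih u (lt_of_le_of_lt hu ht) q).2 i (hu.trans hti)
      rw [Submodule.mem_bot, LinearMap.sub_apply, sub_eq_zero] at this
      exact this
    cases j with
    | zero =>
      intro q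
      constructor
      · rw [bsYhat_single, bsW_succ, bsStep_single_zero]
        exact single_mem_bsMle le_rfl _
      · intro i _
        rw [bsYhat_single, bsW_succ, bsW_succ, bsStep_single_zero, bsStep_single_zero]
    | succ j' =>
      intro q
      have hmem : Finsupp.single j' q ∈ bsMle (R := R) j' := single_mem_bsMle le_rfl q
      have hj' : j' < j' + 1 := Nat.lt_succ_self j'
      have key : ∀ i, j' + 1 ≤ i →
          bsW p k d (i+1) (Finsupp.single (j'+1) q)
            = (bsReduct p k d bsX (bsYhat p k d)) (Finsupp.single j' q) := by
        intro i hi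
        obtain ⟨i', rfl⟩ : ∃ i', i = i' + 1 := ⟨i - 1, by omega⟩
        rw [bsW_succ, bsStep_single_succ]
        exact bsReduct_agree p k d _ (hYmle j' hj')
          (fun v hv => hWagree j' hj' i' (by omega) v hv) hmem
      constructor
      · rw [bsYhat_single, key (j'+1) le_rfl]
        exact bsReduct_mem p k d (hYmle j' hj') (fun v hv => bsX_mem v hv) hmem
      · intro i hi
        rw [bsYhat_single, key i hi, key (j'+1) le_rfl]

lemma bsYhat_mle_all : ∀ t, ∀ v ∈ bsMle (R := R) t,
    bsYhat p k d v ∈ bsMle (R := R) t := by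
  intro t
  refine map_mem_of_span ?_
  rintro x ⟨u, q, hu, rfl⟩
  exact bsMle_mono hu (bs_main p k d u q).1

lemma bsW_agree_all : ∀ t i, t ≤ i → ∀ v ∈ bsMle (R := R) t,
    bsW p k d (i+1) v = bsYhat p k d v := by
  intro t i hti v hv
  have : ((bsW p k d (i+1) - bsYhat p k d : Module.End R (ℕ →₀ Polynomial R))) v ∈ (⊥ : Submodule R (ℕ →₀ Polynomial R)) := by
    refine map_mem_of_span ?_ v hv
    rintro x ⟨u, q, hu, rfl⟩
    rw [Submodule.mem_bot, LinearMap.sub_apply, sub_eq_zero]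
    exact (bs_main p k d u q).2 i (hu.trans hti)
  rw [Submodule.mem_bot, LinearMap.sub_apply, sub_eq_zero] at this
  exact this

theorem bsYhat_mul_bsX :
    (bsYhat p k d : Module.End R (ℕ →₀ Polynomial R)) * bsX
      = bsReduct p k d bsX (bsYhat p k d) := by
  refine Finsupp.lhom_ext' fun j => LinearMap.ext fun q => ?_
  have : ((bsYhat p k d * bsX) ∘ₗ Finsupp.lsingle j) q
      = bsYhat p k d (bsX (Finsupp.single j q)) := rfl
  rw [this, LinearMap.comp_apply, bsX_single, bsYhat_single, bsW_succ, bsStep_single_succ]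
  change _ = (bsReduct p k d bsX (bsYhat p k d)) (Finsupp.single j q)
  exact bsReduct_agree p k d _ (bsYhat_mle_all p k d j)
    (fun v hv => bsW_agree_all p k d j j le_rfl v hv) (single_mem_bsMle le_rfl q)

lemma bsYhat_single_zero (q : Polynomial R) :
    bsYhat p k d (Finsupp.single 0 q) = Finsupp.single 0 (Polynomial.X * q) := by
  rw [bsYhat_single, bsW_succ, bsStep_single_zero]

lemma bsYhat_pow_single (j : ℕ) :
    ((bsYhat p k d : Module.End R (ℕ →₀ Polynomial R)) ^ j) (Finsupp.single 0 1)
      = Finsupp.single 0 (Polynomial.X ^ j) := by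
  induction j with
  | zero => simp
  | succ j ihj =>
      rw [pow_succ', Module.End.mul_apply, ihj, bsYhat_single_zero, ← pow_succ']

lemma bsX_pow_single (i : ℕ) (q : Polynomial R) :
    ((bsX : Module.End R (ℕ →₀ Polynomial R)) ^ i) (Finsupp.single 0 q)
      = Finsupp.single i q := by
  induction i with
  | zero => simp
  | succ i ihi =>
      rw [pow_succ', Module.End.mul_apply, ihi, bsX_single]

end Model2


/-- With `p` prime, `n ≥ 1`, `k ≥ 2`, `p ∣ k - 1`, let
`h₀ ∈ FreeAlgebra ℤ (Fin 2)` be the (unique) element with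
`p² • h₀ = (1 + p X_1)(1 + p X_0) - (1 + p X_0)(1 + p X_1)^k`, let `g₀` be its image in
`FreeAlgebra (ZMod (p^n)) (Fin 2)` and `I(g₀)` the two-sided ideal it generates. Then the images
modulo `I(g₀)` of the monomials `X_0^i * X_1^j`, for `(i, j) ∈ ℕ × ℕ`, form a basis of the
quotient as a `ZMod (p^n)`-module. -/
theorem baumslag_solitar_algebra_basis_left
    (p n k : ℕ) (hp : Nat.Prime p) (hn : 1 ≤ n) (hk : 2 ≤ k) (hdvd : p ∣ k - 1)
    (h₀ : FreeAlgebra ℤ (Fin 2))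
    (hh₀ : ((p : ℤ) ^ 2) • h₀ =
      (1 + (p : FreeAlgebra ℤ (Fin 2)) * FreeAlgebra.ι ℤ 1) *
        (1 + (p : FreeAlgebra ℤ (Fin 2)) * FreeAlgebra.ι ℤ 0) -
      (1 + (p : FreeAlgebra ℤ (Fin 2)) * FreeAlgebra.ι ℤ 0) *
        (1 + (p : FreeAlgebra ℤ (Fin 2)) * FreeAlgebra.ι ℤ 1) ^ k)
    (g₀ : FreeAlgebra (ZMod (p ^ n)) (Fin 2))
    (hg₀ : g₀ = FreeAlgebra.lift ℤ (fun j => FreeAlgebra.ι (ZMod (p ^ n)) j) h₀) :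
    let I := TwoSidedIdeal.span {g₀}
    let b : ℕ × ℕ → I.ringCon.Quotient := fun ij =>
      RingCon.mk' I.ringCon
        (FreeAlgebra.ι (ZMod (p ^ n)) 0 ^ ij.1 * FreeAlgebra.ι (ZMod (p ^ n)) 1 ^ ij.2)
    LinearIndependent (ZMod (p ^ n)) b ∧
      Submodule.span (ZMod (p ^ n)) (Set.range b) = ⊤ := by
  intro I b
  obtain ⟨d, hd⟩ := hdvd
  set R := ZMod (p ^ n) with hR
  -- Step 1 : identify h₀
  have key := bs_key p k d hk hd.symm (FreeAlgebra.ι ℤ (0 : Fin 2)) (FreeAlgebra.ι ℤ (1 : Fin 2))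
  have hp2 : ((p : ℤ) ^ 2) ≠ 0 := pow_ne_zero _ (Int.natCast_ne_zero.mpr hp.pos.ne')
  have hh₀' : h₀ = FreeAlgebra.ι ℤ 1 * FreeAlgebra.ι ℤ 0
      - bsReduct p k d (FreeAlgebra.ι ℤ (0 : Fin 2)) (FreeAlgebra.ι ℤ (1 : Fin 2)) := by
    refine smul_right_injective (FreeAlgebra ℤ (Fin 2)) hp2 ?_
    show ((p : ℤ) ^ 2) • h₀ = ((p : ℤ) ^ 2) • _
    rw [hh₀]
    exact key
  -- Step 2 : explicit formula for g₀
  set x := FreeAlgebra.ι R (0 : Fin 2) with hx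
  set y := FreeAlgebra.ι R (1 : Fin 2) with hy
  have hg : g₀ = y * x - bsReduct p k d x y := by
    rw [hg₀, hh₀']
    have hmap := map_bsReduct
      (((FreeAlgebra.lift ℤ (fun j => FreeAlgebra.ι R j)) :
          FreeAlgebra ℤ (Fin 2) →ₐ[ℤ] FreeAlgebra R (Fin 2)) :
        FreeAlgebra ℤ (Fin 2) →+* FreeAlgebra R (Fin 2)) p k d
      (FreeAlgebra.ι ℤ (0 : Fin 2)) (FreeAlgebra.ι ℤ (1 : Fin 2))
    simp only [AlgHom.coe_ringHom_mk, RingHom.coe_coe] at hmap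
    rw [map_sub, map_mul, hmap, FreeAlgebra.lift_ι_apply, FreeAlgebra.lift_ι_apply]
  -- Step 3 : the quotient
  set π : FreeAlgebra R (Fin 2) →+* I.ringCon.Quotient := RingCon.mk' I.ringCon with hπdef
  have hg0I : g₀ ∈ I := TwoSidedIdeal.subset_span rfl
  have hπg : π g₀ = 0 := by
    have hker := I.ker_ringCon_mk'
    rw [← hker] at hg0I
    exact (TwoSidedIdeal.mem_ker _).mp hg0I
  have hrel : π y * π x = bsReduct p k d (π x) (π y) := by
    have h0 : π (y * x - bsReduct p k d x y) = 0 := by rw [← hg]; exact hπg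
    rw [map_sub, sub_eq_zero, map_mul, map_bsReduct] at h0
    exact h0
  set X' := π x with hX'
  set Y' := π y with hY'
  have hb : ∀ ij : ℕ × ℕ, b ij = X' ^ ij.1 * Y' ^ ij.2 := fun ij => by
    show π (x ^ ij.1 * y ^ ij.2) = _
    rw [map_mul, map_pow, map_pow]
  have hπsmul : ∀ (r : R) (f : FreeAlgebra R (Fin 2)), π (r • f) = r • π f :=
    fun r f => I.ringCon.coe_smul r f
  constructor
  · -- linear independence
    set ρ : FreeAlgebra R (Fin 2) →ₐ[R] Module.End R (ℕ →₀ Polynomial R) :=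
      FreeAlgebra.lift R (fun i : Fin 2 => if i = 0 then bsX else bsYhat p k d) with hρdef
    have hρx : ρ x = bsX := by rw [hx, hρdef, FreeAlgebra.lift_ι_apply]; simp
    have hρy : ρ y = bsYhat p k d := by rw [hy, hρdef, FreeAlgebra.lift_ι_apply]; simp
    have hρg : ρ g₀ = 0 := by
      have hmap2 := map_bsReduct (S := FreeAlgebra R (Fin 2)) (T := Module.End R (ℕ →₀ Polynomial R))
        ((ρ : FreeAlgebra R (Fin 2) →+* Module.End R (ℕ →₀ Polynomial R))) p k d x y
      simp only [RingHom.coe_coe] at hmap2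
      rw [hg, map_sub, map_mul, hmap2, hρx, hρy, bsYhat_mul_bsX p k d, sub_self]
    have hkerρ : ∀ f ∈ I, ρ f = 0 := by
      intro f hf
      have hmem := TwoSidedIdeal.mem_span_iff.mp hf (TwoSidedIdeal.ker ρ) ?_
      · exact (TwoSidedIdeal.mem_ker ρ).mp hmem
      · intro z hz
        rw [Set.mem_singleton_iff] at hz
        subst hz
        exact (TwoSidedIdeal.mem_ker ρ).mpr hρg
    have hwell : ∀ a c : FreeAlgebra R (Fin 2), I.ringCon a c →
        ρ a (Finsupp.single 0 1) = ρ c (Finsupp.single 0 1) := by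
      intro a c hac
      have hIc : a - c ∈ I := (TwoSidedIdeal.rel_iff I a c).mp hac
      have h2 : ρ (a - c) = 0 := hkerρ _ hIc
      rw [map_sub, sub_eq_zero] at h2
      rw [h2]
    set ψfun : I.ringCon.Quotient → (ℕ →₀ Polynomial R) :=
      Quotient.lift (fun a => ρ a (Finsupp.single 0 1)) hwell with hψfun
    have hψπ : ∀ f : FreeAlgebra R (Fin 2), ψfun (π f) = ρ f (Finsupp.single 0 1) :=
      fun f => rfl
    set ψ : I.ringCon.Quotient →ₗ[R] (ℕ →₀ Polynomial R) :=
      { toFun := ψfun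
        map_add' := by
          intro q r
          induction q using Quotient.ind with | _ a =>
          induction r using Quotient.ind with | _ c =>
          show ψfun (π a + π c) = ψfun (π a) + ψfun (π c)
          rw [← map_add π, hψπ, hψπ, hψπ, map_add, LinearMap.add_apply]
        map_smul' := by
          intro r q
          induction q using Quotient.ind with | _ a =>
          show ψfun (r • π a) = r • ψfun (π a)
          rw [← hπsmul r a, hψπ, hψπ, map_smul, LinearMap.smul_apply] } with hψ
    have hψb : ∀ ij : ℕ × ℕ,
        ψ (b ij) = Finsupp.single ij.1 ((Polynomial.X : Polynomial R) ^ ij.2) := by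
      intro ij
      show ψfun (π (x ^ ij.1 * y ^ ij.2)) = _
      rw [hψπ, map_mul, map_pow, map_pow, hρx, hρy, Module.End.mul_apply,
        bsYhat_pow_single, bsX_pow_single]
    have hLI : LinearIndependent R
        (fun ij : ℕ × ℕ => Finsupp.single ij.1 ((Polynomial.X : Polynomial R) ^ ij.2)) := by
      have hB := (Finsupp.basis (fun _ : ℕ => Polynomial.basisMonomials R)).linearIndependent
      have hcomp := hB.comp (fun ij : ℕ × ℕ => (⟨ij.1, ij.2⟩ : Σ _ : ℕ, ℕ))
        (Equiv.sigmaEquivProd ℕ ℕ).symm.injective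
      have heq : ((Finsupp.basis (fun _ : ℕ => Polynomial.basisMonomials R)) ∘
          (fun ij : ℕ × ℕ => (⟨ij.1, ij.2⟩ : Σ _ : ℕ, ℕ)))
          = fun ij : ℕ × ℕ => Finsupp.single ij.1 ((Polynomial.X : Polynomial R) ^ ij.2) := by
        funext ij
        simp [Finsupp.coe_basis, Polynomial.coe_basisMonomials, Polynomial.X_pow_eq_monomial]
      rw [heq] at hcomp
      exact hcomp
    refine LinearIndependent.of_comp ψ ?_
    have hcompeq : (⇑ψ ∘ b)
        = fun ij : ℕ × ℕ => Finsupp.single ij.1 ((Polynomial.X : Polynomial R) ^ ij.2) :=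
      funext fun ij => hψb ij
    rw [hcompeq]
    exact hLI
  -- spanning
  · set sb := Submodule.span R (Set.range b) with hsb
    set S₁ := Submodule.span R ((Set.range fun j => Y' ^ j) ∪ (Set.range fun j => X' * Y' ^ j))
      with hS₁
    have hgen1 : ∀ j : ℕ, Y' ^ j ∈ S₁ := fun j =>
      Submodule.subset_span (Or.inl ⟨j, rfl⟩)
    have hgen2 : ∀ j : ℕ, X' * Y' ^ j ∈ S₁ := fun j =>
      Submodule.subset_span (Or.inr ⟨j, rfl⟩)
    have hYX : Y' * X' ∈ S₁ := by
      rw [hrel, bsReduct]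
      refine Submodule.add_mem _ (Submodule.add_mem _ (Submodule.add_mem _ ?_ ?_) ?_) ?_
      · exact zsmul_mem_submodule _ (by simpa using hgen2 1)
      · exact zsmul_mem_submodule _ (by simpa using hgen1 1)
      · exact Submodule.sum_mem _ fun m _ => zsmul_mem_submodule _ (hgen1 m)
      · exact Submodule.sum_mem _ fun m _ => zsmul_mem_submodule _ (hgen2 m)
    have hmulY : ∀ s ∈ S₁, ∀ j : ℕ, s * Y' ^ j ∈ S₁ := by
      intro s hs j
      induction hs using Submodule.span_induction with
      | mem u hu =>
          rcases hu with ⟨m, rfl⟩ | ⟨m, rfl⟩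
          · rw [← pow_add]; exact hgen1 _
          · rw [mul_assoc, ← pow_add]; exact hgen2 _
      | zero => rw [zero_mul]; exact Submodule.zero_mem _
      | add u v _ _ hu hv => rw [add_mul]; exact Submodule.add_mem _ hu hv
      | smul r u _ hu => rw [smul_mul_assoc]; exact Submodule.smul_mem _ _ hu
    have hYS1 : ∀ s ∈ S₁, Y' * s ∈ S₁ := by
      intro s hs
      induction hs using Submodule.span_induction with
      | mem u hu =>
          rcases hu with ⟨m, rfl⟩ | ⟨m, rfl⟩
          · rw [← pow_succ']; exact hgen1 _
          · rw [← mul_assoc]; exact hmulY _ hYX m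
      | zero => rw [mul_zero]; exact Submodule.zero_mem _
      | add u v _ _ hu hv => rw [mul_add]; exact Submodule.add_mem _ hu hv
      | smul r u _ hu => rw [mul_smul_comm]; exact Submodule.smul_mem _ _ hu
    have hYjX : ∀ j : ℕ, Y' ^ j * X' ∈ S₁ := by
      intro j
      induction j with
      | zero => rw [pow_zero, one_mul]; simpa using hgen2 0
      | succ j ihj =>
          rw [pow_succ', mul_assoc]
          exact hYS1 _ ihj
    have hXsb : ∀ v ∈ sb, X' * v ∈ sb := by
      intro v hv
      induction hv using Submodule.span_induction with
      | mem u hu =>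
          rcases hu with ⟨ij, rfl⟩
          rw [hb ij, ← mul_assoc, ← pow_succ']
          exact Submodule.subset_span ⟨(ij.1 + 1, ij.2), (hb _).symm⟩
      | zero => rw [mul_zero]; exact Submodule.zero_mem _
      | add u v _ _ hu hv => rw [mul_add]; exact Submodule.add_mem _ hu hv
      | smul r u _ hu => rw [mul_smul_comm]; exact Submodule.smul_mem _ _ hu
    have hsbY : ∀ v ∈ sb, ∀ c : ℕ, v * Y' ^ c ∈ sb := by
      intro v hv c
      induction hv using Submodule.span_induction with
      | mem u hu =>
          rcases hu with ⟨ij, rfl⟩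
          rw [hb ij, mul_assoc, ← pow_add]
          exact Submodule.subset_span ⟨(ij.1, ij.2 + c), (hb _).symm⟩
      | zero => rw [zero_mul]; exact Submodule.zero_mem _
      | add u v _ _ hu hv => rw [add_mul]; exact Submodule.add_mem _ hu hv
      | smul r u _ hu => rw [smul_mul_assoc]; exact Submodule.smul_mem _ _ hu
    have hYjXa : ∀ a j : ℕ, Y' ^ j * X' ^ a ∈ sb := by
      intro a
      induction a with
      | zero =>
          intro j
          rw [pow_zero, mul_one]
          exact Submodule.subset_span ⟨(0, j), by rw [hb (0, j)]; simp⟩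
      | succ a iha =>
          intro j
          have hstep : ∀ s ∈ S₁, s * X' ^ a ∈ sb := by
            intro s hs
            induction hs using Submodule.span_induction with
            | mem u hu =>
                rcases hu with ⟨m, rfl⟩ | ⟨m, rfl⟩
                · exact iha m
                · rw [mul_assoc]; exact hXsb _ (iha m)
            | zero => rw [zero_mul]; exact Submodule.zero_mem _
            | add u v _ _ hu hv => rw [add_mul]; exact Submodule.add_mem _ hu hv
            | smul r u _ hu => rw [smul_mul_assoc]; exact Submodule.smul_mem _ _ hu
          rw [pow_succ', ← mul_assoc]
          exact hstep _ (hYjX j)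
    have hXisb : ∀ i : ℕ, ∀ v ∈ sb, X' ^ i * v ∈ sb := by
      intro i
      induction i with
      | zero => intro v hv; rw [pow_zero, one_mul]; exact hv
      | succ i ihi =>
          intro v hv
          rw [pow_succ', mul_assoc]
          exact hXsb _ (ihi v hv)
    have hclosed : ∀ u ∈ sb, ∀ v ∈ sb, u * v ∈ sb := by
      intro u hu
      induction hu using Submodule.span_induction with
      | mem w hw =>
          rcases hw with ⟨ij, rfl⟩
          intro v hv
          induction hv using Submodule.span_induction with
          | mem w' hw' =>
              rcases hw' with ⟨ac, rfl⟩
              rw [hb ij, hb ac, mul_assoc, ← mul_assoc (Y' ^ ij.2)]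
              exact hXisb _ _ (hsbY _ (hYjXa ac.1 ij.2) ac.2)
          | zero => rw [mul_zero]; exact Submodule.zero_mem _
          | add u' v' _ _ hu' hv' => rw [mul_add]; exact Submodule.add_mem _ hu' hv'
          | smul r u' _ hu' => rw [mul_smul_comm]; exact Submodule.smul_mem _ _ hu'
      | zero => intro v hv; rw [zero_mul]; exact Submodule.zero_mem _
      | add u' v' _ _ hu' hv' =>
          intro v hv
          rw [add_mul]; exact Submodule.add_mem _ (hu' v hv) (hv' v hv)
      | smul r u' _ hu' =>
          intro v hv
          rw [smul_mul_assoc]; exact Submodule.smul_mem _ _ (hu' v hv)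
    have hπsmul : ∀ (r : R) (f : FreeAlgebra R (Fin 2)), π (r • f) = r • π f :=
      fun r f => I.ringCon.coe_smul r f
    have hmain : ∀ f : FreeAlgebra R (Fin 2), π f ∈ sb := by
      intro f
      induction f using FreeAlgebra.induction with
      | grade0 r =>
          have : algebraMap R (FreeAlgebra R (Fin 2)) r = r • (1 : FreeAlgebra R (Fin 2)) :=
            Algebra.algebraMap_eq_smul_one r
          rw [this, hπsmul]
          refine Submodule.smul_mem _ _ ?_
          have h1 : (1 : I.ringCon.Quotient) = b (0, 0) := by rw [hb (0, 0)]; simp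
          rw [map_one, h1]
          exact Submodule.subset_span ⟨(0, 0), rfl⟩
      | grade1 i =>
          fin_cases i
          · refine Submodule.subset_span ⟨(1, 0), ?_⟩
            rw [hb (1, 0)]
            simp [hX', hx]
          · refine Submodule.subset_span ⟨(0, 1), ?_⟩
            rw [hb (0, 1)]
            simp [hY', hy]
      | mul f g hf hg' =>
          rw [map_mul]
          exact hclosed _ hf _ hg'
      | add f g hf hg' =>
          rw [map_add]
          exact Submodule.add_mem _ hf hg'
    rw [eq_top_iff]
    rintro q -
    induction q using Quotient.ind with
    | _ f => exact hmain f
end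

section
/- Let G be a group, p a prime, and let (P i) be the p-central series of G. Then for every n ≥ 1, P n equals the subgroup of G generated by the set of all elements g^(p^j) where g ranges over the (i)-th term of the lower central series of G and i + j = n with i ≥ 1; in Mathlib indexing, P n = Subgroup.closure (⋃ over pairs (i, j) with i ≥ 1 and i + j = n of {g^(p^j) : g ∈ lowerCentralSeries G (i − 1)}). -/
open scoped commutatorElement

namespace PCSAux

open Subgroup

variable {G : Type*} [Group G]

/-- Auxiliary generating set: `p^j`-th powers of elements of `γ_i` for `i + j = m`, `i ≥ a`. -/
def Tset (p : ℕ) (G : Type*) [Group G] (a m : ℕ) : Set G :=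
  ⋃ (i : ℕ) (j : ℕ) (_ : a ≤ i) (_ : i + j = m),
    (fun g => g ^ p ^ j) '' ((⊤ : Subgroup G).lowerCentralSeries (i - 1) : Set G)

/-- The subgroup generated by `Tset`. -/
def T (p : ℕ) (G : Type*) [Group G] (a m : ℕ) : Subgroup G :=
  Subgroup.closure (Tset p G a m)

lemma mem_Tset {p a m i j : ℕ} (hi : a ≤ i) (hij : i + j = m) {x : G}
    (hx : x ∈ (⊤ : Subgroup G).lowerCentralSeries (i - 1)) : x ^ p ^ j ∈ Tset p G a m := by
  simp only [Tset, Set.mem_iUnion]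
  exact ⟨i, j, hi, hij, ⟨x, hx, rfl⟩⟩

lemma mem_Tset_iff {p a m : ℕ} {s : G} :
    s ∈ Tset p G a m ↔ ∃ i j, a ≤ i ∧ i + j = m ∧
      ∃ z ∈ (⊤ : Subgroup G).lowerCentralSeries (i - 1), z ^ p ^ j = s := by
  simp only [Tset, Set.mem_iUnion, Set.mem_image, SetLike.mem_coe]
  constructor
  · rintro ⟨i, j, hi, hij, z, hz, rfl⟩
    exact ⟨i, j, hi, hij, z, hz, rfl⟩
  · rintro ⟨i, j, hi, hij, z, hz, rfl⟩
    exact ⟨i, j, hi, hij, z, hz, rfl⟩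

lemma T_mono {p : ℕ} {a b m : ℕ} (hab : a ≤ b) : T p G b m ≤ T p G a m := by
  apply Subgroup.closure_mono
  intro x hx
  rw [mem_Tset_iff] at hx ⊢
  obtain ⟨i, j, hbi, hij, hx⟩ := hx
  exact ⟨i, j, hab.trans hbi, hij, hx⟩

instance T_normal (p a m : ℕ) : (T p G a m).Normal := by
  constructor
  intro x hx g
  induction hx using Subgroup.closure_induction with
  | mem s hs =>
    apply Subgroup.subset_closure
    rw [mem_Tset_iff] at hs ⊢
    obtain ⟨i, j, hi, hij, z, hz, rfl⟩ := hs
    refine ⟨i, j, hi, hij, g * z * g⁻¹,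
      (Subgroup.lowerCentralSeries_normal ⊤ (i - 1)).conj_mem z hz g, ?_⟩
    rw [conj_pow]
  | one => simpa using Subgroup.one_mem _
  | mul u v hu hv ihu ihv =>
    have : g * (u * v) * g⁻¹ = (g * u * g⁻¹) * (g * v * g⁻¹) := by group
    rw [this]; exact Subgroup.mul_mem _ ihu ihv
  | inv u hu ihu =>
    have : g * u⁻¹ * g⁻¹ = (g * u * g⁻¹)⁻¹ := by group
    rw [this]; exact Subgroup.inv_mem _ ihu

/-- If all commutators of generators with arbitrary elements lie in a normal subgroup `N`,
then so do commutators of arbitrary elements of the closure. -/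
lemma commutator_mem_of_forall {N : Subgroup G} [hN : N.Normal] {S : Set G}
    (hS : ∀ s ∈ S, ∀ h : G, ⁅s, h⁆ ∈ N) :
    ∀ g ∈ Subgroup.closure S, ∀ h : G, ⁅g, h⁆ ∈ N := by
  intro g hg
  induction hg using Subgroup.closure_induction with
  | mem s hs => exact hS s hs
  | one => intro h; simpa using Subgroup.one_mem N
  | mul u v hu hv ihu ihv =>
    intro h
    have : ⁅u * v, h⁆ = u * ⁅v, h⁆ * u⁻¹ * ⁅u, h⁆ := by
      simp only [commutatorElement_def]; group
    rw [this]
    exact N.mul_mem (hN.conj_mem _ (ihv h) u) (ihu h)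
  | inv u hu ihu =>
    intro h
    have : ⁅u⁻¹, h⁆ = u⁻¹ * ⁅u, h⁆⁻¹ * u := by
      simp only [commutatorElement_def]; group
    rw [this]
    have := hN.conj_mem _ (N.inv_mem (ihu h)) u⁻¹
    simpa using this

lemma pow_mem_of_forall {p : ℕ} {N : Subgroup G} [hN : N.Normal] {S : Set G}
    (hcomm : ∀ g ∈ Subgroup.closure S, ∀ h : G, ⁅g, h⁆ ∈ N)
    (hpow : ∀ s ∈ S, s ^ p ∈ N) :
    ∀ g ∈ Subgroup.closure S, g ^ p ∈ N := by
  intro g hg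
  induction hg using Subgroup.closure_induction with
  | mem s hs => exact hpow s hs
  | one => simpa using Subgroup.one_mem N
  | mul u v hu hv ihu ihv =>
    have hcom : Commute ((u : G) : G ⧸ N) ((v : G) : G ⧸ N) := by
      rw [← commutatorElement_eq_one_iff_commute]
      have h0 : ((⁅u, v⁆ : G) : G ⧸ N) = ⁅((u : G) : G ⧸ N), ((v : G) : G ⧸ N)⁆ := by
        simp [commutatorElement_def, QuotientGroup.mk_mul, QuotientGroup.mk_inv]
      rw [← h0, QuotientGroup.eq_one_iff]
      exact hcomm u hu v
    have : (((u * v) ^ p : G) : G ⧸ N) = 1 := by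
      have h1 : ((u ^ p : G) : G ⧸ N) = 1 := (QuotientGroup.eq_one_iff _).2 ihu
      have h2 : ((v ^ p : G) : G ⧸ N) = 1 := (QuotientGroup.eq_one_iff _).2 ihv
      rw [QuotientGroup.mk_pow] at h1 h2
      rw [QuotientGroup.mk_pow, QuotientGroup.mk_mul, hcom.mul_pow, h1, h2, one_mul]
    exact (QuotientGroup.eq_one_iff _).1 this
  | inv u hu ihu =>
    rw [inv_pow]
    exact N.inv_mem ihu

lemma Tset_pow_mem {p a m : ℕ} : ∀ s ∈ Tset p G a m, s ^ p ∈ T p G a (m + 1) := by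
  intro s hs
  rw [mem_Tset_iff] at hs
  obtain ⟨i, j, hi, hij, z, hz, rfl⟩ := hs
  have : (z ^ p ^ j) ^ p = z ^ p ^ (j + 1) := by
    rw [← pow_mul, ← pow_succ]
  rw [this]
  exact Subgroup.subset_closure (mem_Tset hi (by omega) hz)

/-- Key commutator lemma: for `x ∈ γ_i` (paper index `i ≥ 1`),
`⁅x^(p^j), h⁆ ∈ T (i+1) (i+j+1)`. -/
lemma keyC (p : ℕ) : ∀ j i, 1 ≤ i → ∀ x ∈ (⊤ : Subgroup G).lowerCentralSeries (i - 1), ∀ h : G,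
    ⁅x ^ p ^ j, h⁆ ∈ T p G (i + 1) (i + j + 1) := by
  intro j
  induction j using Nat.strong_induction_on with
  | _ j ih =>
    intro i hi x hx h
    match j with
    | 0 =>
      have hxh : ⁅x, h⁆ ∈ (⊤ : Subgroup G).lowerCentralSeries i := by
        have hii : i - 1 + 1 = i := Nat.succ_pred_eq_of_pos hi
        rw [← hii, Subgroup.lowerCentralSeries_succ]
        exact Subgroup.subset_closure ⟨x, hx, h, Subgroup.mem_top h, rfl⟩
      have : ⁅x ^ p ^ 0, h⁆ = ⁅x, h⁆ ^ p ^ 0 := by simp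
      rw [this]
      exact Subgroup.subset_closure
        (mem_Tset (le_refl (i + 1)) (by omega) (by simpa using hxh))
    | j' + 1 =>
      set y := x ^ p ^ j' with hy
      set c := ⁅y, h⁆ with hcdef
      have hc : c ∈ T p G (i + 1) (i + j' + 1) := ih j' (by omega) i hi x hx h
      set N := T p G (i + 1) (i + (j' + 1) + 1) with hNdef
      -- commutators of generators of T (i+1) (i+j'+1) with anything lie in N
      have hgen : ∀ s ∈ Tset p G (i + 1) (i + j' + 1), ∀ g : G, ⁅s, g⁆ ∈ N := by
        intro s hs g
        rw [mem_Tset_iff] at hs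
        obtain ⟨k, l, hk, hkl, z, hz, rfl⟩ := hs
        have hl : l < j' + 1 := by omega
        have h1 : ⁅z ^ p ^ l, g⁆ ∈ T p G (k + 1) (k + l + 1) :=
          ih l hl k (by omega) z hz g
        have h2 : k + l + 1 = i + (j' + 1) + 1 := by omega
        rw [h2] at h1
        exact T_mono (by omega) h1
      have hcommN : ∀ g ∈ Subgroup.closure (Tset p G (i + 1) (i + j' + 1)),
          ∀ g' : G, ⁅g, g'⁆ ∈ N := commutator_mem_of_forall hgen
      have hpowgen : ∀ s ∈ Tset p G (i + 1) (i + j' + 1), s ^ p ∈ N := by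
        intro s hs
        have := Tset_pow_mem s hs
        simpa [hNdef, show i + j' + 1 + 1 = i + (j' + 1) + 1 by omega] using this
      have hcp : c ^ p ∈ N := pow_mem_of_forall hcommN hpowgen c hc
      have hcy : ⁅c, y⁆ ∈ N := hcommN c hc y
      -- pass to the quotient
      have hcomq : Commute ((c : G) : G ⧸ N) ((y : G) : G ⧸ N) := by
        rw [← commutatorElement_eq_one_iff_commute]
        have h0 : ((⁅c, y⁆ : G) : G ⧸ N) = ⁅((c : G) : G ⧸ N), ((y : G) : G ⧸ N)⁆ := by
          simp [commutatorElement_def, QuotientGroup.mk_mul, QuotientGroup.mk_inv]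
        rw [← h0]
        exact (QuotientGroup.eq_one_iff _).2 hcy
      have key : ∀ k : ℕ, ((⁅y ^ k, h⁆ : G) : G ⧸ N) = ((c : G) : G ⧸ N) ^ k := by
        intro k
        induction k with
        | zero => simp
        | succ k ihk =>
          have hid : ⁅y ^ (k + 1), h⁆ = y ^ k * c * (y ^ k)⁻¹ * ⁅y ^ k, h⁆ := by
            simp only [hcdef, commutatorElement_def]
            rw [pow_succ]
            group
          rw [hid]
          rw [QuotientGroup.mk_mul, QuotientGroup.mk_mul, QuotientGroup.mk_mul,
            QuotientGroup.mk_inv, QuotientGroup.mk_pow, ihk]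
          have := (hcomq.symm.pow_left k).eq
          -- (y^k : quotient) * c = c * (y^k)
          rw [show ((y : G) : G ⧸ N) ^ k * ((c : G) : G ⧸ N) * (((y : G) : G ⧸ N) ^ k)⁻¹
              = ((c : G) : G ⧸ N) by
            rw [this]; group]
          rw [pow_succ']
      have hfinal : ((⁅x ^ p ^ (j' + 1), h⁆ : G) : G ⧸ N) = 1 := by
        have hxy : x ^ p ^ (j' + 1) = y ^ p := by
          rw [hy, ← pow_mul, ← pow_succ]
        rw [hxy, key p]
        have : ((c ^ p : G) : G ⧸ N) = 1 := (QuotientGroup.eq_one_iff _).2 hcp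
        rw [QuotientGroup.mk_pow] at this
        exact this
      exact (QuotientGroup.eq_one_iff _).1 hfinal

lemma lcs_le_Tset {p n : ℕ} (hn : 1 ≤ n) :
    ((⊤ : Subgroup G).lowerCentralSeries (n - 1) : Set G) ⊆ Tset p G 1 n := by
  intro x hx
  have : x ^ p ^ 0 ∈ Tset p G 1 n := mem_Tset hn (by omega) hx
  simpa using this

end PCSAux

open PCSAux Subgroup in
/-- **Exercise 1.** For every `n ≥ 1`, the `n`-th term of the `p`-central series of
`G` equals the subgroup generated by all `g^(p^j)` with `g` in the `i`-th term of the lower central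
series (paper indexing, i.e. `(⊤ : Subgroup G).lowerCentralSeries (i - 1)` in Mathlib) and `i + j = n`, `i ≥ 1`. -/
theorem pCentralSeries_eq_closure_lowerCentralSeries_pows
    (G : Type*) [Group G] (p : ℕ) (hp : Nat.Prime p) (n : ℕ) (hn : 1 ≤ n) :
    pCentralSeries p G n = Subgroup.closure
      (⋃ (i : ℕ) (j : ℕ) (_ : 1 ≤ i) (_ : i + j = n),
        (fun g => g ^ p ^ j) '' ((⊤ : Subgroup G).lowerCentralSeries (i - 1) : Set G)) := by
  have hT : ∀ m : ℕ, Subgroup.closure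
      (⋃ (i : ℕ) (j : ℕ) (_ : 1 ≤ i) (_ : i + j = m),
        (fun g => g ^ p ^ j) '' ((⊤ : Subgroup G).lowerCentralSeries (i - 1) : Set G)) = T p G 1 m := by
    intro m; rfl
  rw [hT]
  obtain ⟨m, rfl⟩ : ∃ m, n = m + 1 := ⟨n - 1, by omega⟩
  clear hn
  induction m with
  | zero =>
    -- both sides are ⊤
    have h1 : pCentralSeries p G 1 = ⊤ := rfl
    rw [h1]
    symm
    rw [eq_top_iff]
    intro g _
    have : g ^ p ^ 0 ∈ Tset p G 1 1 :=
      mem_Tset (le_refl 1) (by omega) (by simp [Subgroup.lowerCentralSeries_zero])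
    simpa [T] using Subgroup.subset_closure this
  | succ m ihm =>
    have hP : pCentralSeries p G (m + 2) = Subgroup.closure
        ({x | ∃ g ∈ pCentralSeries p G (m + 1), x = g ^ p} ∪
         {x | ∃ g ∈ pCentralSeries p G (m + 1), ∃ h : G, x = ⁅g, h⁆}) := rfl
    apply le_antisymm
    · -- P (m+2) ≤ T 1 (m+2)
      rw [hP, Subgroup.closure_le]
      have hgen : ∀ s ∈ Tset p G 1 (m + 1), ∀ g : G, ⁅s, g⁆ ∈ T p G 1 (m + 2) := by
        intro s hs g
        rw [mem_Tset_iff] at hs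
        obtain ⟨k, l, hk, hkl, z, hz, rfl⟩ := hs
        have h1 : ⁅z ^ p ^ l, g⁆ ∈ T p G (k + 1) (k + l + 1) := keyC p l k hk z hz g
        have h2 : k + l + 1 = m + 2 := by omega
        rw [h2] at h1
        exact T_mono (by omega) h1
      have hcommN : ∀ g ∈ Subgroup.closure (Tset p G 1 (m + 1)),
          ∀ g' : G, ⁅g, g'⁆ ∈ T p G 1 (m + 2) := commutator_mem_of_forall hgen
      have hpowgen : ∀ s ∈ Tset p G 1 (m + 1), s ^ p ∈ T p G 1 (m + 2) :=
        fun s hs => Tset_pow_mem s hs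
      rintro x (⟨g, hg, rfl⟩ | ⟨g, hg, h, rfl⟩)
      · rw [ihm] at hg
        exact pow_mem_of_forall hcommN hpowgen g hg
      · rw [ihm] at hg
        exact hcommN g hg h
    · -- T 1 (m+2) ≤ P (m+2)
      rw [T, Subgroup.closure_le]
      intro x hx
      rw [mem_Tset_iff] at hx
      obtain ⟨i, j, hi, hij, z, hz, rfl⟩ := hx
      match j with
      | 0 =>
        -- i = m + 2, z ∈ lcs (m+1) ≤ P (m+2)
        have hie : i = m + 2 := by omega
        subst hie
        have hz' : z ∈ (⊤ : Subgroup G).lowerCentralSeries (m + 1) := by simpa using hz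
        have hle : (⊤ : Subgroup G).lowerCentralSeries (m + 1) ≤ pCentralSeries p G (m + 2) := by
          rw [Subgroup.lowerCentralSeries_succ, Subgroup.commutator_def, Subgroup.closure_le]
          rintro w ⟨a, ha, q, -, rfl⟩
          have haP : a ∈ pCentralSeries p G (m + 1) := by
            rw [ihm]
            exact Subgroup.subset_closure (lcs_le_Tset (by omega) ha)
          rw [hP]
          apply Subgroup.subset_closure
          right
          exact ⟨a, haP, q, by simp [commutatorElement_def]⟩
        simpa using hle hz'
      | j' + 1 =>
        have h1 : z ^ p ^ j' ∈ T p G 1 (m + 1) :=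
          Subgroup.subset_closure (mem_Tset hi (by omega) hz)
        rw [← ihm] at h1
        have h2 : z ^ p ^ (j' + 1) = (z ^ p ^ j') ^ p := by
          rw [← pow_mul, ← pow_succ]
        rw [h2, hP]
        exact Subgroup.subset_closure (Or.inl ⟨z ^ p ^ j', h1, rfl⟩)
end
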